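/- arXiv:1412.6201 — 5 statements merged into one kernel-verified Lean document; each statement's English description precedes it below -/
import Mathlib

section
/- Every integer valued symmetric submodular function f : 2^V → ℕ on a finite set V with linear width k has a linked linear layout of width k. -/
/-- The width of a linear layout `π` of `f`: the maximum over `1 ≤ i ≤ n−1` of
`f` applied to the set of the first `i` elements. -/
def layoutWidthF {V : Type} [Fintype V] (f : Set V → ℕ)
    (π : V ≃ Fin (Fintype.card V)) : ℕ :=
  (Finset.Ico 1 (Fintype.card V)).sup fun i => f {v | (π v : ℕ) < i}

/-- The linear width of `f`: the minimum width over all linear layouts. -/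
noncomputable def linWidthF {V : Type} [Fintype V] (f : Set V → ℕ) : ℕ :=
  ⨅ π : V ≃ Fin (Fintype.card V), layoutWidthF f π

/-- The layout `π` of `f` is linked: for all `1 ≤ i < j ≤ n−1`,
`min_{i ≤ ℓ ≤ j} f(π⁻¹{1,…,ℓ}) = min { f Z | π⁻¹{1,…,i} ⊆ Z ⊆ π⁻¹{1,…,j} }`
(note `V ∖ π⁻¹{j+1,…,n} = π⁻¹{1,…,j}`). -/
def IsLinkedLayoutF {V : Type} [Fintype V] (f : Set V → ℕ)
    (π : V ≃ Fin (Fintype.card V)) : Prop :=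
  ∀ i j : ℕ, 1 ≤ i → i < j → j ≤ Fintype.card V - 1 →
    sInf ((fun ℓ => f {v | (π v : ℕ) < ℓ}) '' Set.Icc i j) =
    sInf (f '' {Z : Set V | {v | (π v : ℕ) < i} ⊆ Z ∧ Z ⊆ {v | (π v : ℕ) < j}})

/-!
Among all layouts, descend along the total cost `∑ v, f {w | π w < π v}` without increasing the
width. If a layout is not linked at `i < j`, a minimiser `Z` of `f` between the `i`-th and the
`j`-th prefix has a value below every prefix value in between. Moving `Z` to the front, keeping
the order otherwise, replaces each prefix `P` by `Z ∩ P` or `Z ∪ P`, which by submodularity and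
the minimality of `Z` is no worse than `P`, and turns the first prefix leaving `Z` into `Z`
itself, so the cost drops strictly.
-/

theorem Fintype.exists_equiv_fin_lt_iff {V α : Type*} [Fintype V] [LinearOrder α] (key : V → α)
    (hkey : Function.Injective key) :
    ∃ π : V ≃ Fin (Fintype.card V), ∀ v w, π w < π v ↔ key w < key v := by
  classical
  let s := Finset.univ.image key
  let e : V ≃ s :=
    Equiv.ofBijective (fun v => ⟨key v, Finset.mem_image_of_mem _ (Finset.mem_univ v)⟩)
    ⟨fun v w h => hkey (congrArg Subtype.val h), fun ⟨a, ha⟩ => by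
      obtain ⟨v, -, rfl⟩ := Finset.mem_image.mp ha
      exact ⟨v, rfl⟩⟩
  let o := s.orderIsoOfFin (Finset.card_image_of_injective _ hkey)
  exact ⟨e.trans o.symm.toEquiv, fun v w => o.symm.lt_iff_lt⟩

theorem apply_inf_le_of_isMinOn {α β : Type*} [Lattice α] [AddCommMonoid β] [PartialOrder β]
    [IsOrderedCancelAddMonoid β] {f : α → β} (hsub : ∀ x y, f (x ⊔ y) + f (x ⊓ y) ≤ f x + f y)
    {a b z x : α} (hz : z ∈ Set.Icc a b) (hmin : IsMinOn f (Set.Icc a b) z) (hx : x ∈ Set.Icc a b) :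
    f (z ⊓ x) ≤ f x := by
  have : f z ≤ f (z ⊔ x) := hmin ⟨le_sup_of_le_left hz.1, sup_le hz.2 hx.2⟩
  exact le_of_add_le_add_left ((add_le_add_left this _).trans (hsub z x))

theorem apply_sup_le_of_isMinOn {α β : Type*} [Lattice α] [AddCommMonoid β] [PartialOrder β]
    [IsOrderedCancelAddMonoid β] {f : α → β} (hsub : ∀ x y, f (x ⊔ y) + f (x ⊓ y) ≤ f x + f y)
    {a b z x : α} (hz : z ∈ Set.Icc a b) (hmin : IsMinOn f (Set.Icc a b) z) (hx : x ∈ Set.Icc a b) :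
    f (z ⊔ x) ≤ f x := by
  have : f z ≤ f (z ⊓ x) := hmin ⟨le_inf hz.1 hx.1, inf_le_of_left_le hz.2⟩
  exact le_of_add_le_add_right
    ((add_le_add_right this _).trans ((hsub z x).trans_eq (add_comm _ _)))

theorem setOf_lt_mem_Icc {V α : Type*} [Preorder α] (g : V → α) {i j ℓ : α}
    (hℓ : ℓ ∈ Set.Icc i j) : {v | g v < ℓ} ∈ Set.Icc {v | g v < i} {v | g v < j} :=
  ⟨fun _ hv => lt_of_lt_of_le hv hℓ.1, fun _ hv => lt_of_lt_of_le hv hℓ.2⟩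

theorem Equiv.val_eq_zero_of_setOf_lt_eq_empty {V : Type*} {n : ℕ} (π : V ≃ Fin n) {v : V}
    (h : {w | (π w : ℕ) < π v} = ∅) : (π v : ℕ) = 0 := by
  by_contra hv
  have hfirst : π.symm ⟨0, (π v).pos⟩ ∈ {w | (π w : ℕ) < π v} := by
    show (π (π.symm _) : ℕ) < π v
    rw [Equiv.apply_symm_apply]
    exact Nat.pos_of_ne_zero hv
  exact h.subset hfirst

section

variable {V : Type} [Fintype V]

noncomputable def layoutCost (f : Set V → ℕ) (π : V ≃ Fin (Fintype.card V)) : ℕ :=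
  ∑ v, f {w | (π w : ℕ) < π v}

theorem layoutWidthF_le_iff {f : Set V → ℕ} {π : V ≃ Fin (Fintype.card V)} {k : ℕ} :
    layoutWidthF f π ≤ k ↔ ∀ v, (π v : ℕ) ≠ 0 → f {w | (π w : ℕ) < π v} ≤ k := by
  rw [layoutWidthF, Finset.sup_le_iff]
  refine ⟨fun h v hv => h _ (Finset.mem_Ico.2 ⟨Nat.one_le_iff_ne_zero.2 hv, (π v).isLt⟩),
    fun h ℓ hℓ => ?_⟩
  obtain ⟨h1, h2⟩ := Finset.mem_Ico.1 hℓ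
  simpa using h (π.symm ⟨ℓ, h2⟩) (by simp only [Equiv.apply_symm_apply]; omega)

theorem exists_layout_prefix_eq_inter_or_union (π : V ≃ Fin (Fintype.card V)) (Z : Set V) :
    ∃ π' : V ≃ Fin (Fintype.card V),
      (∀ v ∈ Z, {w | (π' w : ℕ) < π' v} = Z ∩ {w | (π w : ℕ) < π v}) ∧
      (∀ v ∉ Z, {w | (π' w : ℕ) < π' v} = Z ∪ {w | (π w : ℕ) < π v}) := by
  classical
  let key v : ℕ := if v ∈ Z then π v else Fintype.card V + π v
  have hkey : Function.Injective key := by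
    intro v w h
    have := (π v).isLt
    have := (π w).isLt
    simp only [key] at h
    split_ifs at h <;> first | omega | exact π.injective (Fin.ext (by omega))
  obtain ⟨π', hπ'⟩ := Fintype.exists_equiv_fin_lt_iff key hkey
  refine ⟨π', fun v hv => ?_, fun v hv => ?_⟩ <;> ext w <;> have := (π v).isLt <;>
    have := (π w).isLt <;> by_cases hw : w ∈ Z <;>
    simp only [Set.mem_ofPred_eq, Set.mem_inter_iff, Set.mem_union, Fin.val_fin_lt, hπ', key, hv, hw,
      ↓reduceIte, true_and, false_and, true_or, false_or, iff_true, iff_false] <;> omega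

theorem sInf_prefix_eq_sInf_corridor {f : Set V → ℕ} {π : V ≃ Fin (Fintype.card V)}
    {i j ℓ : ℕ} (hℓ : ℓ ∈ Set.Icc i j)
    (hmin : IsMinOn f (Set.Icc {v | (π v : ℕ) < i} {v | (π v : ℕ) < j}) {v | (π v : ℕ) < ℓ}) :
    sInf ((fun ℓ => f {v | (π v : ℕ) < ℓ}) '' Set.Icc i j) =
      sInf (f '' {Z : Set V | {v | (π v : ℕ) < i} ⊆ Z ∧ Z ⊆ {v | (π v : ℕ) < j}}) := by
  rw [IsLeast.csInf_eq ⟨Set.mem_image_of_mem _ hℓ, ?_⟩]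
  · refine (IsLeast.csInf_eq
      ⟨Set.mem_image_of_mem f (setOf_lt_mem_Icc (fun v => (π v : ℕ)) hℓ), ?_⟩).symm
    rintro _ ⟨Z, hZ, rfl⟩
    exact hmin hZ
  · rintro _ ⟨m, hm, rfl⟩
    exact hmin (setOf_lt_mem_Icc _ hm)

theorem apply_inter_setOf_lt_le {f : Set V → ℕ}
    (hsub : ∀ X Y : Set V, f (X ∪ Y) + f (X ∩ Y) ≤ f X + f Y) {π : V ≃ Fin (Fintype.card V)}
    {i j : ℕ} {Z : Set V} (hZ : Z ∈ Set.Icc {v | (π v : ℕ) < i} {v | (π v : ℕ) < j})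
    (hmin : IsMinOn f (Set.Icc {v | (π v : ℕ) < i} {v | (π v : ℕ) < j}) Z)
    {v : V} (hv : v ∈ Z) :
    f (Z ∩ {w | (π w : ℕ) < π v}) ≤ f {w | (π w : ℕ) < π v} := by
  by_cases hvi : (π v : ℕ) ≤ i
  · rw [Set.inter_eq_self_of_subset_right
      (show {w | (π w : ℕ) < π v} ⊆ Z from fun w hw => hZ.1 (lt_of_lt_of_le hw hvi))]
  · exact apply_inf_le_of_isMinOn hsub hZ hmin
      (setOf_lt_mem_Icc (fun v => (π v : ℕ)) ⟨by omega, (hZ.2 hv).le⟩)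

theorem apply_union_setOf_lt_le {f : Set V → ℕ}
    (hsub : ∀ X Y : Set V, f (X ∪ Y) + f (X ∩ Y) ≤ f X + f Y) {π : V ≃ Fin (Fintype.card V)}
    {i j : ℕ} {Z : Set V} (hZ : Z ∈ Set.Icc {v | (π v : ℕ) < i} {v | (π v : ℕ) < j})
    (hmin : IsMinOn f (Set.Icc {v | (π v : ℕ) < i} {v | (π v : ℕ) < j}) Z)
    {v : V} (hv : v ∉ Z) :
    f (Z ∪ {w | (π w : ℕ) < π v}) ≤ f {w | (π w : ℕ) < π v} := by
  by_cases hvj : j ≤ (π v : ℕ)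
  · rw [Set.union_eq_self_of_subset_left
      (show Z ⊆ {w | (π w : ℕ) < π v} from fun w hw => lt_of_lt_of_le (hZ.2 hw) hvj)]
  · exact apply_sup_le_of_isMinOn hsub hZ hmin
      (setOf_lt_mem_Icc (fun v => (π v : ℕ)) ⟨not_lt.1 fun h => hv (hZ.1 h), by omega⟩)

theorem exists_layout_width_le_cost_lt {f : Set V → ℕ}
    (hsub : ∀ X Y : Set V, f (X ∪ Y) + f (X ∩ Y) ≤ f X + f Y) {π : V ≃ Fin (Fintype.card V)}
    {i j : ℕ} {Z : Set V} (hZ : Z ∈ Set.Icc {v | (π v : ℕ) < i} {v | (π v : ℕ) < j})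
    (hmin : IsMinOn f (Set.Icc {v | (π v : ℕ) < i} {v | (π v : ℕ) < j}) Z)
    (hi : 1 ≤ i) (hij : i ≤ j)
    (hlt : ∀ ℓ ∈ Set.Icc i j, f Z < f {v | (π v : ℕ) < ℓ}) :
    ∃ π' : V ≃ Fin (Fintype.card V),
      layoutWidthF f π' ≤ layoutWidthF f π ∧ layoutCost f π' < layoutCost f π := by
  obtain ⟨π', hin, hout⟩ := exists_layout_prefix_eq_inter_or_union π Z
  have hle (v : V) : f {w | (π' w : ℕ) < π' v} ≤ f {w | (π w : ℕ) < π v} := by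
    by_cases hv : v ∈ Z
    · exact (hin v hv).symm ▸ apply_inter_setOf_lt_le hsub hZ hmin hv
    · exact (hout v hv).symm ▸ apply_union_setOf_lt_le hsub hZ hmin hv
  refine ⟨π', layoutWidthF_le_iff.2 fun v hv => (hle v).trans (layoutWidthF_le_iff.1 le_rfl v ?_),
    Finset.sum_lt_sum (fun v _ => hle v) ?_⟩
  · -- the width skips the empty prefix, and `π v = 0` puts `v` first in `Z`, hence first in `π'`
    intro h0
    refine hv (π'.val_eq_zero_of_setOf_lt_eq_empty ?_)
    rw [hin v (hZ.1 (show (π v : ℕ) < i by omega))]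
    ext w
    simp [h0]
  · obtain ⟨u, hu, huj⟩ : ∃ u ∉ Z, (π u : ℕ) < j := by
      by_contra! h
      have hZj : Z = {v | (π v : ℕ) < j} := hZ.2.antisymm fun v hv => by
        by_contra hvZ
        exact (h v hvZ).not_gt hv
      exact (hlt j ⟨hij, le_rfl⟩).ne (congrArg f hZj)
    obtain ⟨v, hv, hfirst⟩ :=
      Set.exists_min_image Zᶜ (fun v => (π v : ℕ)) (Set.toFinite _) ⟨u, hu⟩
    have hprefix : {w | (π' w : ℕ) < π' v} = Z := by
      refine (hout v hv).trans (Set.union_eq_self_of_subset_right fun w hw => ?_)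
      by_contra hwZ
      exact (hfirst w hwZ).not_gt hw
    refine ⟨v, Finset.mem_univ v, hprefix ▸ hlt _ ⟨not_lt.1 fun h => hv (hZ.1 h), ?_⟩⟩
    exact (hfirst u hu).trans huj.le

theorem exists_layout_width_le_cost_lt_of_not_linked {f : Set V → ℕ}
    (hsub : ∀ X Y : Set V, f (X ∪ Y) + f (X ∩ Y) ≤ f X + f Y) {π : V ≃ Fin (Fintype.card V)}
    (hπ : ¬ IsLinkedLayoutF f π) :
    ∃ π' : V ≃ Fin (Fintype.card V),
      layoutWidthF f π' ≤ layoutWidthF f π ∧ layoutCost f π' < layoutCost f π := by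
  simp only [IsLinkedLayoutF, not_forall] at hπ
  obtain ⟨i, j, hi, hij, -, hne⟩ := hπ
  obtain ⟨Z, hZ, hmin⟩ := Set.exists_min_image
    (Set.Icc {v | (π v : ℕ) < i} {v | (π v : ℕ) < j}) f (Set.toFinite _)
    ⟨_, setOf_lt_mem_Icc (fun v => (π v : ℕ)) ⟨le_rfl, hij.le⟩⟩
  refine exists_layout_width_le_cost_lt hsub hZ hmin hi hij.le fun ℓ hℓ => ?_
  by_contra! hle
  exact hne (sInf_prefix_eq_sInf_corridor hℓ fun W hW => hle.trans (hmin W hW))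

theorem exists_linked_layout_width_le {f : Set V → ℕ}
    (hsub : ∀ X Y : Set V, f (X ∪ Y) + f (X ∩ Y) ≤ f X + f Y) (π : V ≃ Fin (Fintype.card V)) :
    ∃ π' : V ≃ Fin (Fintype.card V),
      IsLinkedLayoutF f π' ∧ layoutWidthF f π' ≤ layoutWidthF f π := by
  by_cases hπ : IsLinkedLayoutF f π
  · exact ⟨π, hπ, le_rfl⟩
  obtain ⟨π', hwidth, hcost⟩ := exists_layout_width_le_cost_lt_of_not_linked hsub hπ
  obtain ⟨σ, hσ, hσwidth⟩ := exists_linked_layout_width_le hsub π'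
  exact ⟨σ, hσ, hσwidth.trans hwidth⟩
termination_by layoutCost f π

end

theorem exists_linked_layout_general {V : Type} [Fintype V] (f : Set V → ℕ)
    (hsub : ∀ X Y : Set V, f (X ∪ Y) + f (X ∩ Y) ≤ f X + f Y) :
    ∃ π : V ≃ Fin (Fintype.card V),
      IsLinkedLayoutF f π ∧ layoutWidthF f π = linWidthF f := by
  have : Nonempty (V ≃ Fin (Fintype.card V)) := ⟨Fintype.equivFin V⟩
  obtain ⟨π, hπ⟩ := ciInf_mem fun π : V ≃ Fin (Fintype.card V) => layoutWidthF f π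
  obtain ⟨σ, hσ, hσwidth⟩ := exists_linked_layout_width_le hsub π
  exact ⟨σ, hσ, le_antisymm (hσwidth.trans_eq hπ) (ciInf_le (OrderBot.bddBelow _) σ)⟩

/-- Every integer valued symmetric submodular function on a finite set
with linear width `k` has a linked linear layout of width `k`. -/
theorem exists_linked_layout {V : Type} [Fintype V] (f : Set V → ℕ)
    (hsym : ∀ X : Set V, f X = f Xᶜ)
    (hsub : ∀ X Y : Set V, f (X ∪ Y) + f (X ∩ Y) ≤ f X + f Y) :
    ∃ π : V ≃ Fin (Fintype.card V),
      IsLinkedLayoutF f π ∧ layoutWidthF f π = linWidthF f :=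
  exists_linked_layout_general f hsub
end

section
/- Let F be a field, σ a sesqui-morphism on F, G a σ-symmetric F*-graph, and x,y vertices of G with M_G[x,y] ≠ 0. For every subset X of V_G, cutrk_{G∧xy}(X) = cutrk_G(X). -/
open Classical

noncomputable section

/-- A bijection `σ : F → F` is a *sesqui-morphism* if it is an involution and
the map `x ↦ σ x / σ 1` is a field automorphism of `F`. -/
def IsSesquiMorphism {F : Type} [Field F] (σ : F → F) : Prop :=
  Function.Involutive σ ∧ ∃ φ : F ≃+* F, ∀ x, φ x = σ x / σ 1

/-- `M` is the adjacency matrix of a σ-symmetric F*-graph: zero diagonal and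
`M x y = σ (M y x)` for all `x, y`. -/
def IsSigmaSymmGraph {F V : Type} [Field F] (σ : F → F) (M : Matrix V V F) : Prop :=
  (∀ x, M x x = 0) ∧ ∀ x y, M x y = σ (M y x)

/-- Pivot complementation `G ∧ xy`. -/
def pivotComp {F V : Type} [Field F] (σ : F → F) (M : Matrix V V F) (x y : V) :
    Matrix V V F :=
  Matrix.of fun s u =>
    if s = u then 0
    else if s = x ∧ u = y then -1 / M y x
    else if s = y ∧ u = x then -(σ 1) ^ 2 / M x y
    else if s = x then M y u / M y x
    else if s = y then σ 1 * M x u / M x y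
    else if u = x then σ 1 * M s y / M x y
    else if u = y then M s x / M y x
    else M s u - M s x * M y u / M y x - M s y * M x u / M x y

/-- The cut-rank of `X`: the rank over `F` of the submatrix `M[X, Xᶜ]`. -/
def cutrk {F V : Type} [Field F] [Fintype V] (M : Matrix V V F) (X : Set V) : ℕ :=
  (Matrix.of fun (i : X) (j : (Xᶜ : Set V)) => M i j).rank

/-- The rank over `F` of the submatrix `M[X, Y]`. -/
def rkSub {F V : Type} [Field F] [Fintype V] (M : Matrix V V F) (X Y : Set V) : ℕ :=
  (Matrix.of fun (i : X) (j : Y) => M i j).rank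

/-- The width of a linear layout `π` (listing the vertices as positions `0, …, n-1`):
the maximum over `1 ≤ i ≤ n-1` of the cut-rank of the first `i` vertices. -/
def layoutWidth {F V : Type} [Field F] [Fintype V] (M : Matrix V V F)
    (π : V ≃ Fin (Fintype.card V)) : ℕ :=
  (Finset.Ico 1 (Fintype.card V)).sup fun i => cutrk M {v | (π v : ℕ) < i}

/-- The linear rank-width of `M`: the minimum width of a linear layout. -/
def lrw {F V : Type} [Field F] [Fintype V] (M : Matrix V V F) : ℕ :=
  ⨅ π : V ≃ Fin (Fintype.card V), layoutWidth M π

/-- `PivotEquiv σ G G'` holds if `G'` arises from `G` by a finite sequence of pivot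
complementations, each applied to an edge of the current graph. -/
inductive PivotEquiv {F V : Type} [Field F] (σ : F → F) :
    Matrix V V F → Matrix V V F → Prop
  | refl (M : Matrix V V F) : PivotEquiv σ M M
  | tail (M N : Matrix V V F) (x y : V) : x ≠ y → N x y ≠ 0 →
      PivotEquiv σ M N → PivotEquiv σ M (pivotComp σ N x y)

/-- `H` is a pivot-minor of `G`: `H` is simply isomorphic to an induced subgraph of
a graph pivot equivalent to `G`. -/
def IsPivotMinor {F V W : Type} [Field F] (σ : F → F)
    (H : Matrix W W F) (G : Matrix V V F) : Prop :=
  ∃ G' : Matrix V V F, PivotEquiv σ G G' ∧ ∃ h : W ↪ V, ∀ x y, H x y = G' (h x) (h y)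

end

/-!
If `x` and `y` lie on the same side of the cut, the cut matrix of `G ∧ xy` is obtained from that
of `G` by invertible row (or column) operations: rows `x` and `y` are swapped and rescaled, and the
other rows change by multiples of rows `x` and `y`. If `x` and `y` are separated, both cut matrices
have a nonzero entry at `(x, y)` (or `(y, x)`) with the same Schur complement, and the rank of a
matrix is one more than the rank of the Schur complement of any nonzero entry.
-/

open Submodule

namespace Matrix

variable {F m n : Type*} [Field F] [Fintype m] [Fintype n]

theorem rank_eq_of_rows_mem_span {m' : Type*} [Fintype m'] {A : Matrix m n F}
    {B : Matrix m' n F} (hAB : ∀ i, A i ∈ span F (Set.range B))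
    (hBA : ∀ i, B i ∈ span F (Set.range A)) : A.rank = B.rank := by
  rw [rank_eq_finrank_span_row, rank_eq_finrank_span_row]
  exact congrArg (fun W : Submodule F (n → F) => Module.finrank F W) <|
    le_antisymm (span_le.2 (Set.range_subset_iff.2 hAB)) (span_le.2 (Set.range_subset_iff.2 hBA))

theorem rank_eq_of_row_ops {A B : Matrix m n F} {x y : m} {a b : F} (ha : a ≠ 0) (hb : b ≠ 0)
    (f g : m → F) (hx : ∀ j, A x j = a * B y j) (hy : ∀ j, A y j = b * B x j)
    (hs : ∀ s j, s ≠ x → s ≠ y → A s j = B s j + f s * B x j + g s * B y j) :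
    A.rank = B.rank := by
  have hAx : A x = a • B y := funext hx
  have hAy : A y = b • B x := funext hy
  have hAs : ∀ s, s ≠ x → s ≠ y → A s = B s + f s • B x + g s • B y :=
    fun s hsx hsy => funext (hs s · hsx hsy)
  have hBx : B x ∈ span F (Set.range A) := by
    rw [show B x = b⁻¹ • A y by rw [hAy, smul_smul, inv_mul_cancel₀ hb, one_smul]]
    exact smul_mem _ _ (subset_span ⟨y, rfl⟩)
  have hBy : B y ∈ span F (Set.range A) := by
    rw [show B y = a⁻¹ • A x by rw [hAx, smul_smul, inv_mul_cancel₀ ha, one_smul]]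
    exact smul_mem _ _ (subset_span ⟨x, rfl⟩)
  refine rank_eq_of_rows_mem_span (fun s => ?_) (fun s => ?_)
  · have hB : ∀ k, B k ∈ span F (Set.range B) := fun k => subset_span ⟨k, rfl⟩
    by_cases hsx : s = x
    · exact hsx ▸ hAx ▸ smul_mem _ _ (hB y)
    by_cases hsy : s = y
    · exact hsy ▸ hAy ▸ smul_mem _ _ (hB x)
    rw [hAs s hsx hsy]
    exact add_mem (add_mem (hB s) (smul_mem _ _ (hB x))) (smul_mem _ _ (hB y))
  · by_cases hsx : s = x
    · exact hsx ▸ hBx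
    by_cases hsy : s = y
    · exact hsy ▸ hBy
    rw [show B s = A s - f s • B x - g s • B y by rw [hAs s hsx hsy]; abel]
    exact sub_mem (sub_mem (subset_span ⟨s, rfl⟩) (smul_mem _ _ hBx)) (smul_mem _ _ hBy)

/-- The Schur complement of the entry `A i j`, kept in the shape of `A`: its row `i` and column
`j` vanish. -/
def schurAt (A : Matrix m n F) (i : m) (j : n) : Matrix m n F :=
  of fun k l => A k l - A k j * A i l / A i j

theorem rank_eq_one_add_rank_schurAt (A : Matrix m n F) {i : m} {j : n} (h : A i j ≠ 0) :
    A.rank = 1 + (A.schurAt i j).rank := by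
  set S := A.schurAt i j
  have hS : ∀ k, S k = A k - (A k j / A i j) • A i := fun k => by
    ext l
    simp only [S, schurAt, of_apply, Pi.sub_apply, Pi.smul_apply, smul_eq_mul]
    ring
  have hspan : span F (Set.range A) = (F ∙ A i) ⊔ span F (Set.range S) := by
    apply le_antisymm
    · refine span_le.2 (Set.range_subset_iff.2 fun k => ?_)
      rw [show A k = S k + (A k j / A i j) • A i by rw [hS]; abel]
      exact add_mem (mem_sup_right (subset_span ⟨k, rfl⟩))
        (mem_sup_left (smul_mem _ _ (mem_span_singleton_self _)))
    · refine sup_le ((span_singleton_le_iff_mem _ _).2 (subset_span ⟨i, rfl⟩))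
        (span_le.2 (Set.range_subset_iff.2 fun k => ?_))
      rw [hS]
      exact sub_mem (subset_span ⟨k, rfl⟩) (smul_mem _ _ (subset_span ⟨i, rfl⟩))
  -- the rows of `S` vanish in column `j`, while `A i` does not
  have hdisj : (F ∙ A i) ⊓ span F (Set.range S) = ⊥ := by
    have hker : span F (Set.range S) ≤ LinearMap.ker (LinearMap.proj j : (n → F) →ₗ[F] F) :=
      span_le.2 (Set.range_subset_iff.2 fun k => by simp [S, schurAt, h])
    refine eq_bot_iff.2 fun v ⟨hv, hvS⟩ => ?_
    obtain ⟨c, rfl⟩ := mem_span_singleton.1 hv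
    have hc : c * A i j = 0 := by simpa using hker hvS
    simp [(mul_eq_zero.1 hc).resolve_right h]
  have hdim := finrank_sup_add_finrank_inf_eq (F ∙ A i) (span F (Set.range S))
  rw [hdisj, finrank_bot, add_zero, ← hspan,
    finrank_span_singleton fun h0 => h (congrFun h0 j)] at hdim
  rw [rank_eq_finrank_span_row, rank_eq_finrank_span_row]
  exact hdim

theorem rank_eq_of_schurAt_eq {A B : Matrix m n F} {i : m} {j : n} (hA : A i j ≠ 0)
    (hB : B i j ≠ 0) (h : ∀ k l, k ≠ i → l ≠ j → A.schurAt i j k l = B.schurAt i j k l) :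
    A.rank = B.rank := by
  have hS : A.schurAt i j = B.schurAt i j := by
    ext k l
    by_cases hk : k = i
    · subst hk; simp [schurAt, hA, hB]
    by_cases hl : l = j
    · subst hl; simp [schurAt, hA, hB]
    exact h k l hk hl
  rw [rank_eq_one_add_rank_schurAt A hA, rank_eq_one_add_rank_schurAt B hB, hS]

end Matrix

theorem IsSesquiMorphism.map_one_ne_zero {F : Type} [Field F] {σ : F → F}
    (hσ : IsSesquiMorphism σ) : σ 1 ≠ 0 := by
  obtain ⟨-, φ, hφ⟩ := hσ
  intro h
  simpa [h] using hφ 1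

theorem IsSesquiMorphism.map_zero {F : Type} [Field F] {σ : F → F}
    (hσ : IsSesquiMorphism σ) : σ 0 = 0 := by
  have hσ1 := hσ.map_one_ne_zero
  obtain ⟨-, φ, hφ⟩ := hσ
  simpa [hσ1] using (hφ 0).symm

section PivotCompEntries

variable {F V : Type} [Field F] (σ : F → F) (M : Matrix V V F) {x y s u : V}

theorem pivotComp_fst_snd (hne : x ≠ y) : pivotComp σ M x y x y = -1 / M y x := by
  simp [pivotComp, hne]

theorem pivotComp_snd_fst (hne : x ≠ y) : pivotComp σ M x y y x = -(σ 1) ^ 2 / M x y := by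
  simp [pivotComp, hne.symm]

theorem pivotComp_fst_apply (hne : x ≠ y) (hux : u ≠ x) (huy : u ≠ y) :
    pivotComp σ M x y x u = M y u / M y x := by
  simp [pivotComp, hux.symm, huy, hne]

theorem pivotComp_snd_apply (hne : x ≠ y) (hux : u ≠ x) (huy : u ≠ y) :
    pivotComp σ M x y y u = σ 1 * M x u / M x y := by
  simp [pivotComp, huy.symm, hne.symm, hux]

theorem pivotComp_apply_fst (hsx : s ≠ x) (hsy : s ≠ y) :
    pivotComp σ M x y s x = σ 1 * M s y / M x y := by
  simp [pivotComp, hsx, hsy]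

theorem pivotComp_apply_snd (hne : x ≠ y) (hsx : s ≠ x) (hsy : s ≠ y) :
    pivotComp σ M x y s y = M s x / M y x := by
  simp [pivotComp, hsx, hsy, hne.symm]

theorem pivotComp_apply_of_ne (hsu : s ≠ u) (hsx : s ≠ x) (hsy : s ≠ y) (hux : u ≠ x)
    (huy : u ≠ y) :
    pivotComp σ M x y s u = M s u - M s x * M y u / M y x - M s y * M x u / M x y := by
  simp [pivotComp, hsu, hsx, hsy, hux, huy]

end PivotCompEntries

section CutRank

variable {F V : Type} [Field F] [Fintype V] {σ : F → F} {M : Matrix V V F} {x y : V}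
  {X : Set V}

theorem cutrk_pivotComp_of_mem_of_mem (hne : x ≠ y) (hxy : M x y ≠ 0) (hyx : M y x ≠ 0)
    (hσ1 : σ 1 ≠ 0) (hx : x ∈ X) (hy : y ∈ X) : cutrk (pivotComp σ M x y) X = cutrk M X := by
  have hux (u : (Xᶜ : Set V)) : (u : V) ≠ x := (ne_of_mem_of_not_mem hx u.2).symm
  have huy (u : (Xᶜ : Set V)) : (u : V) ≠ y := (ne_of_mem_of_not_mem hy u.2).symm
  refine Matrix.rank_eq_of_row_ops (x := ⟨x, hx⟩) (y := ⟨y, hy⟩) (inv_ne_zero hyx)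
    (div_ne_zero hσ1 hxy) (fun s => -(M s y / M x y)) (fun s => -(M s x / M y x))
    (fun u => ?_) (fun u => ?_) (fun s u hsx hsy => ?_) <;> simp only [Matrix.of_apply]
  · rw [pivotComp_fst_apply σ M hne (hux u) (huy u)]; ring
  · rw [pivotComp_snd_apply σ M hne (hux u) (huy u)]; ring
  · rw [pivotComp_apply_of_ne σ M (ne_of_mem_of_not_mem s.2 u.2) (fun h => hsx (Subtype.ext h))
      (fun h => hsy (Subtype.ext h)) (hux u) (huy u)]
    ring

theorem cutrk_pivotComp_of_notMem_of_notMem (hne : x ≠ y) (hxy : M x y ≠ 0) (hyx : M y x ≠ 0)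
    (hσ1 : σ 1 ≠ 0) (hx : x ∉ X) (hy : y ∉ X) : cutrk (pivotComp σ M x y) X = cutrk M X := by
  have hsx (s : X) : (s : V) ≠ x := ne_of_mem_of_not_mem s.2 hx
  have hsy (s : X) : (s : V) ≠ y := ne_of_mem_of_not_mem s.2 hy
  refine ((Matrix.rank_transpose _).symm.trans ?_).trans (Matrix.rank_transpose _)
  refine Matrix.rank_eq_of_row_ops (x := ⟨x, hx⟩) (y := ⟨y, hy⟩) (div_ne_zero hσ1 hxy)
    (inv_ne_zero hyx) (fun u => -(M y u / M y x)) (fun u => -(M x u / M x y))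
    (fun s => ?_) (fun s => ?_) (fun u s hux huy => ?_) <;>
    simp only [Matrix.transpose_apply, Matrix.of_apply]
  · rw [pivotComp_apply_fst σ M (hsx s) (hsy s)]; ring
  · rw [pivotComp_apply_snd σ M hne (hsx s) (hsy s)]; ring
  · rw [pivotComp_apply_of_ne σ M (ne_of_mem_of_not_mem s.2 u.2) (hsx s) (hsy s)
      (fun h => hux (Subtype.ext h)) (fun h => huy (Subtype.ext h))]
    ring

theorem cutrk_pivotComp_of_mem_of_notMem (hne : x ≠ y) (hxy : M x y ≠ 0) (hyx : M y x ≠ 0)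
    (hx : x ∈ X) (hy : y ∉ X) : cutrk (pivotComp σ M x y) X = cutrk M X := by
  refine Matrix.rank_eq_of_schurAt_eq (i := ⟨x, hx⟩) (j := ⟨y, hy⟩) ?_ hxy fun s u hs hu => ?_
  · simpa [pivotComp_fst_snd σ M hne] using hyx
  have hsx : (s : V) ≠ x := fun h => hs (Subtype.ext h)
  have hsy : (s : V) ≠ y := ne_of_mem_of_not_mem s.2 hy
  have hux : (u : V) ≠ x := (ne_of_mem_of_not_mem hx u.2).symm
  have huy : (u : V) ≠ y := fun h => hu (Subtype.ext h)
  simp only [Matrix.schurAt, Matrix.of_apply]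
  rw [pivotComp_apply_of_ne σ M (ne_of_mem_of_not_mem s.2 u.2) hsx hsy hux huy,
    pivotComp_apply_snd σ M hne hsx hsy, pivotComp_fst_apply σ M hne hux huy,
    pivotComp_fst_snd σ M hne]
  field_simp
  ring

theorem cutrk_pivotComp_of_notMem_of_mem (hne : x ≠ y) (hxy : M x y ≠ 0) (hyx : M y x ≠ 0)
    (hσ1 : σ 1 ≠ 0) (hx : x ∉ X) (hy : y ∈ X) : cutrk (pivotComp σ M x y) X = cutrk M X := by
  refine Matrix.rank_eq_of_schurAt_eq (i := ⟨y, hy⟩) (j := ⟨x, hx⟩) ?_ hyx fun s u hs hu => ?_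
  · simpa [pivotComp_snd_fst σ M hne, hσ1] using hxy
  have hsx : (s : V) ≠ x := ne_of_mem_of_not_mem s.2 hx
  have hsy : (s : V) ≠ y := fun h => hs (Subtype.ext h)
  have hux : (u : V) ≠ x := fun h => hu (Subtype.ext h)
  have huy : (u : V) ≠ y := (ne_of_mem_of_not_mem hy u.2).symm
  simp only [Matrix.schurAt, Matrix.of_apply]
  rw [pivotComp_apply_of_ne σ M (ne_of_mem_of_not_mem s.2 u.2) hsx hsy hux huy,
    pivotComp_apply_fst σ M hsx hsy, pivotComp_snd_apply σ M hne hux huy,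
    pivotComp_snd_fst σ M hne]
  field_simp
  ring

end CutRank

/-- Pivot complementation preserves the cut-rank function. -/
theorem pivotComp_cutrk {F V : Type} [Field F] [Fintype V]
    (σ : F → F) (hσ : IsSesquiMorphism σ)
    (M : Matrix V V F) (hM : IsSigmaSymmGraph σ M)
    (x y : V) (hxy : M x y ≠ 0) :
    ∀ X : Set V, cutrk (pivotComp σ M x y) X = cutrk M X := by
  have hyx : M y x ≠ 0 := fun h => hxy (by rw [hM.2 x y, h, hσ.map_zero])
  have hne : x ≠ y := fun h => hxy (by rw [h, hM.1 y])
  have hσ1 := hσ.map_one_ne_zero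
  intro X
  by_cases hx : x ∈ X <;> by_cases hy : y ∈ X
  · exact cutrk_pivotComp_of_mem_of_mem hne hxy hyx hσ1 hx hy
  · exact cutrk_pivotComp_of_mem_of_notMem hne hxy hyx hx hy
  · exact cutrk_pivotComp_of_notMem_of_mem hne hxy hyx hσ1 hx hy
  · exact cutrk_pivotComp_of_notMem_of_notMem hne hxy hyx hσ1 hx hy
end

section
/- Let F be a field and let G be a skew-symmetric bipartite F*-graph with bipartition (A,B), and let M := M_F(G,A,B). For every X ⊆ A∪B, cutrk_G(X) = λ_M(X) − 1. Consequently, if |A∪B| ≥ 2 then lrw(G) = pw(M) − 1. -/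
open Classical

open Classical

noncomputable section

/-- The rank of a set `X` in a matroid: the maximum size of an independent subset
of `X`. -/
def mrank {α : Type} [Fintype α] (M : Matroid α) (X : Set α) : ℕ :=
  (Finset.univ.powerset.filter fun I : Finset α => ↑I ⊆ X ∧ M.Indep ↑I).sup Finset.card

/-- The connectivity function `λ_M(X) = r(X) + r(E∖X) − r(E) + 1` of a matroid. -/
def matroidConn {α : Type} [Fintype α] (M : Matroid α) (X : Set α) : ℕ :=
  mrank M X + mrank M (M.E \ X) + 1 - mrank M M.E

/-- The path-width of a matroid: the minimum over linear layouts of the ground set of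
the maximum connectivity of a proper prefix. -/
def matroidPW {α : Type} [Fintype α] (M : Matroid α) : ℕ :=
  ⨅ π : ↥M.E ≃ Fin (Nat.card ↥M.E),
    (Finset.Ico 1 (Nat.card ↥M.E)).sup fun i =>
      matroidConn M {v | ∃ h : v ∈ M.E, ((π ⟨v, h⟩ : Fin (Nat.card ↥M.E)) : ℕ) < i}

/-- Deletion: `M ∖ X` is the restriction of `M` to `M.E ∖ X`. -/
def mdelete {α : Type} (M : Matroid α) (X : Set α) : Matroid α :=
  M.restrict (M.E \ X)

/-- Contraction: `M / X := (M✶ ∖ X)✶`. -/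
def mcontract {α : Type} (M : Matroid α) (X : Set α) : Matroid α :=
  (mdelete M✶ X)✶

/-- `N` is the column matroid of the matrix `A`: the ground set of `N` is all column
indices, and a set of columns is independent iff it is linearly independent over `F`. -/
def IsColMatroid {R E F : Type} [Field F] (N : Matroid E) (A : Matrix R E F) : Prop :=
  N.E = Set.univ ∧
    ∀ I : Set E, N.Indep I ↔ LinearIndependent F (fun i : I => fun r : R => A r i)

/-- The matrix `(I_A | M_G[A,B])` (with `B = Aᶜ`): rows indexed by `A`, columns by all
vertices; the column of `v ∈ A` is the standard basis vector at `v`, and the column of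
`v ∉ A` is `M_G[·, v]`. -/
def repMatrix {F V : Type} [Field F] (M : Matrix V V F) (A : Set V) :
    Matrix ↥A V F :=
  Matrix.of fun a v => if v ∈ A then (if (a : V) = v then 1 else 0) else M a v

/-- `M` is the adjacency matrix of a skew-symmetric bipartite F*-graph with bipartition
`(A, Aᶜ)`. -/
def IsSkewBipartite {F V : Type} [Field F] (M : Matrix V V F) (A : Set V) : Prop :=
  (∀ x, M x x = 0) ∧ (∀ x y, M x y = - M y x) ∧
    ∀ x y : V, ((x ∈ A ∧ y ∈ A) ∨ (x ∉ A ∧ y ∉ A)) → M x y = 0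

/-- Matroid isomorphism: a bijection between the ground sets preserving independence. -/
def MatroidIso {α β : Type} (N₁ : Matroid α) (N₂ : Matroid β) : Prop :=
  ∃ f : α → β, Set.BijOn f N₁.E N₂.E ∧ ∀ I ⊆ N₁.E, (N₁.Indep I ↔ N₂.Indep (f '' I))

end

/-!
Write `r` for the rank function of `M`. Restricting the columns of `(I_A | G[A,B])` indexed by `Y`
to the rows `A ∖ Y` is a map whose kernel is spanned by the unit columns of `A ∩ Y`, so
`r(Y) = |A ∩ Y| + rk G[A ∖ Y, Y ∖ A]`. Hence `λ(X) - 1 = rk G[A ∖ X, X ∖ A] + rk G[A ∩ X, Xᶜ ∖ A]`.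
Since `G` is bipartite, `G[X, Xᶜ]` is block diagonal with blocks `G[X ∩ A, Xᶜ ∖ A]` and
`G[X ∖ A, Xᶜ ∩ A]`, and by skew-symmetry the latter has the rank of `G[A ∖ X, X ∖ A]`.
The path-width identity then holds layout by layout.
-/

theorem Nat.iInf_add_one {ι : Sort*} [Nonempty ι] (f : ι → ℕ) :
    ⨅ i, (f i + 1) = (⨅ i, f i) + 1 :=
  (Monotone.map_ciInf_of_continuousAt (f := (· + 1)) (continuous_add_const 1).continuousAt
    (fun _ _ h => Nat.add_le_add_right h 1) (OrderBot.bddBelow _)).symm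

section LinearAlgebra

open Module Submodule Set

variable {F : Type*} [Field F]

theorem Submodule.finrank_map_add_finrank_inf_ker {M N : Type*} [AddCommGroup M] [Module F M]
    [AddCommGroup N] [Module F N] [FiniteDimensional F M] (W : Submodule F M) (f : M →ₗ[F] N) :
    finrank F (W.map f) + finrank F ↥(W ⊓ LinearMap.ker f) = finrank F W := by
  rw [← LinearMap.range_domRestrict, ← (f.domRestrict W).finrank_range_add_finrank_ker,
    LinearMap.ker_domRestrict, ← Submodule.map_comap_subtype, Submodule.finrank_map_subtype_eq]

theorem Submodule.finrank_map_of_disjoint_ker {M N : Type*} [AddCommGroup M] [Module F M]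
    [AddCommGroup N] [Module F N] [FiniteDimensional F M] {W : Submodule F M} {f : M →ₗ[F] N}
    (h : Disjoint W (LinearMap.ker f)) : finrank F (W.map f) = finrank F W := by
  have := W.finrank_map_add_finrank_inf_ker f
  rwa [h.eq_bot, finrank_bot, add_zero] at this

theorem LinearIndepOn.finrank_span_image_finset {α W : Type*} [AddCommGroup W] [Module F W]
    {c : α → W} {I : Finset α} (h : LinearIndepOn F c ↑I) :
    finrank F (span F (c '' ↑I)) = I.card := by
  rw [Set.image_eq_range, finrank_span_eq_card h]
  simp

variable {ι κ : Type*}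

theorem span_image_le_ker_of_vanish {R : Type*} {e : R → ι} {u : κ → ι → F} {K : Set κ}
    (hK : ∀ k ∈ K, ∀ i ∉ range e, u k i = 0) :
    span F (u '' K) ≤ LinearMap.ker (LinearMap.funLeft F F ((↑) : ↥(range e)ᶜ → ι)) :=
  span_le.2 <| by
    rintro _ ⟨k, hk, rfl⟩
    exact funext fun i => hK k hk i i.2

theorem finrank_span_image_comp_of_vanish [Finite ι] {R : Type*} {e : R → ι} {u : κ → ι → F}
    {K : Set κ} (hK : ∀ k ∈ K, ∀ i ∉ range e, u k i = 0) :
    finrank F (span F ((fun k => u k ∘ e) '' K)) = finrank F (span F (u '' K)) := by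
  rw [show (fun k => u k ∘ e) = LinearMap.funLeft F F e ∘ u from rfl, image_comp, ← map_span]
  refine finrank_map_of_disjoint_ker <|
    Submodule.disjoint_def.2 fun w hw hker => funext fun i => ?_
  by_cases hi : i ∈ range e
  · obtain ⟨r, rfl⟩ := hi
    exact congrFun (LinearMap.mem_ker.1 hker) r
  · exact congrFun (span_image_le_ker_of_vanish hK hw) ⟨i, hi⟩

theorem finrank_span_image_union_of_vanish [Finite ι] {R₁ R₂ : Type*} {e₁ : R₁ → ι}
    {e₂ : R₂ → ι} (hdisj : Disjoint (range e₁) (range e₂)) {u : κ → ι → F} {K₁ K₂ : Set κ}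
    (h₁ : ∀ k ∈ K₁, ∀ i ∉ range e₁, u k i = 0) (h₂ : ∀ k ∈ K₂, ∀ i ∉ range e₂, u k i = 0) :
    finrank F (span F (u '' (K₁ ∪ K₂))) =
      finrank F (span F ((fun k => u k ∘ e₁) '' K₁)) +
        finrank F (span F ((fun k => u k ∘ e₂) '' K₂)) := by
  have hbot : span F (u '' K₁) ⊓ span F (u '' K₂) = ⊥ := by
    refine (Submodule.eq_bot_iff _).2 fun w hw => funext fun i => ?_
    by_cases hi : i ∈ range e₁
    · exact congrFun (span_image_le_ker_of_vanish h₂ hw.2) ⟨i, hdisj.notMem_of_mem_left hi⟩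
    · exact congrFun (span_image_le_ker_of_vanish h₁ hw.1) ⟨i, hi⟩
  rw [finrank_span_image_comp_of_vanish h₁, finrank_span_image_comp_of_vanish h₂,
    ← Submodule.finrank_sup_add_finrank_inf_eq, hbot, finrank_bot, add_zero, image_union,
    span_union]

theorem Matrix.rank_neg {m n : Type*} [Fintype n] (B : Matrix m n F) : (-B).rank = B.rank := by
  rw [← neg_one_smul F B]
  exact Matrix.rank_smul_of_mem_nonZeroDivisors B (by simp)

theorem mrank_eq_finrank_span {α W : Type} [Fintype α] [AddCommGroup W] [Module F W]
    [FiniteDimensional F W] {N : Matroid α} {c : α → W}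
    (hN : ∀ I, N.Indep I ↔ LinearIndepOn F c I) (Y : Set α) :
    mrank N Y = finrank F (span F (c '' Y)) := by
  apply le_antisymm
  · refine Finset.sup_le fun I hI => ?_
    obtain ⟨hIY, hI⟩ := (Finset.mem_filter.1 hI).2
    rw [← ((hN _).1 hI).finrank_span_image_finset]
    exact Submodule.finrank_mono (span_mono (image_mono hIY))
  · obtain ⟨I, hIY, -, hYI, hI⟩ :=
      exists_linearIndepOn_extension (linearIndepOn_empty F c) (empty_subset Y)
    have hspan : span F (c '' Y) = span F (c '' ↑I.toFinset) := by
      rw [coe_toFinset]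
      exact le_antisymm (span_le.2 hYI) (span_mono (image_mono hIY))
    rw [hspan, LinearIndepOn.finrank_span_image_finset (by rwa [coe_toFinset])]
    refine Finset.le_sup (Finset.mem_filter.2 ⟨Finset.mem_powerset.2 (Finset.subset_univ _), ?_⟩)
    rw [coe_toFinset]
    exact ⟨hIY, (hN I).2 hI⟩

end LinearAlgebra

section Graph

open Module Submodule Set
open scoped Matrix

variable {F V : Type} [Field F]

theorem IsColMatroid.mrank_eq {R E : Type} [Finite R] [Fintype E] {N : Matroid E}
    {A : Matrix R E F} (hN : IsColMatroid N A) (Y : Set E) :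
    mrank N Y = finrank F (span F (A.col '' Y)) :=
  mrank_eq_finrank_span hN.2 Y

theorem repMatrix_col_of_mem (G : Matrix V V F) {A : Set V} {a : V} (ha : a ∈ A) :
    (repMatrix G A).col a = Pi.single ⟨a, ha⟩ 1 := by
  ext a'
  simp [repMatrix, ha, Pi.single_apply, Subtype.ext_iff]

variable [Fintype V]

theorem rkSub_eq_finrank_span (G : Matrix V V F) (R C : Set V) :
    rkSub G R C = finrank F (span F ((fun v (i : R) => G i v) '' C)) := by
  rw [rkSub, Matrix.rank_eq_finrank_span_cols, image_eq_range]
  rfl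

theorem rkSub_comm_of_skew {G : Matrix V V F} (hG : ∀ x y, G x y = -G y x) (R C : Set V) :
    rkSub G R C = rkSub G C R := by
  have hT : Matrix.of (fun (i : C) (j : R) => G i j) =
      -(Matrix.of fun (i : R) (j : C) => G i j)ᵀ := by
    ext i j
    simp [hG i j]
  rw [rkSub, rkSub, hT, Matrix.rank_neg, Matrix.rank_transpose]

theorem rkSub_eq_add_of_bipartite {G : Matrix V V F} {A : Set V}
    (hG : ∀ x y, (x ∈ A ∧ y ∈ A) ∨ (x ∉ A ∧ y ∉ A) → G x y = 0) (R C : Set V) :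
    rkSub G R C = rkSub G (R ∩ A) (C \ A) + rkSub G (R \ A) (C ∩ A) := by
  let e₁ := inclusion (inter_subset_left : R ∩ A ⊆ R)
  let e₂ := inclusion (sdiff_subset : R \ A ⊆ R)
  have he₁ : range e₁ = {i : R | ↑i ∈ A} := by ext i; simp [e₁, Set.range_inclusion]
  have he₂ : range e₂ = {i : R | ↑i ∉ A} := by ext i; simp [e₂, Set.range_inclusion]
  have hdisj : Disjoint (range e₁) (range e₂) := by
    rw [he₁, he₂]
    exact Set.disjoint_left.2 fun _ h₁ h₂ => h₂ h₁
  have h₁ : ∀ v ∈ C \ A, ∀ i ∉ range e₁, G i v = 0 := fun v hv i hi =>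
    hG _ _ (Or.inr ⟨by rwa [he₁] at hi, hv.2⟩)
  have h₂ : ∀ v ∈ C ∩ A, ∀ i ∉ range e₂, G i v = 0 := fun v hv i hi =>
    hG _ _ (Or.inl ⟨by simpa [he₂] using hi, hv.2⟩)
  rw [rkSub_eq_finrank_span, ← sdiff_union_inter C A,
    finrank_span_image_union_of_vanish hdisj h₁ h₂, sdiff_union_inter, rkSub_eq_finrank_span,
    rkSub_eq_finrank_span]
  rfl

theorem finrank_span_image_repMatrix_col (G : Matrix V V F) (A Y : Set V) :
    finrank F (span F ((repMatrix G A).col '' Y)) =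
      (A ∩ Y).ncard + rkSub G (A \ Y) (Y \ A) := by
  set c := (repMatrix G A).col
  let p : (A → F) →ₗ[F] (↥(A \ Y) → F) := LinearMap.funLeft F F (inclusion sdiff_subset)
  have hmap :
      (span F (c '' Y)).map p = span F ((fun v (i : ↥(A \ Y)) => G i v) '' (Y \ A)) := by
    have hzero : ∀ v ∈ Y ∩ A, p (c v) = 0 := fun v hv => funext fun i => by
      have : (i : V) ≠ v := fun h => i.2.2 (h ▸ hv.1)
      simp [p, c, repMatrix_col_of_mem G hv.2, Subtype.ext_iff, this]
    have hcol : ∀ v ∈ Y \ A, p (c v) = fun (i : ↥(A \ Y)) => G i v := fun v hv =>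
      funext fun i => by simp [p, c, repMatrix, hv.2]
    have hY : (fun v => p (c v)) '' Y =
        (fun v => p (c v)) '' (Y \ A) ∪ (fun v => p (c v)) '' (Y ∩ A) := by
      rw [← image_union, sdiff_union_inter]
    have hbot : span F ((fun v => p (c v)) '' (Y ∩ A)) = ⊥ :=
      span_eq_bot.2 (by rintro _ ⟨v, hv, rfl⟩; exact hzero v hv)
    rw [map_span, image_image, hY, span_union, hbot, sup_bot_eq]
    exact congrArg _ (image_congr hcol)
  have hker : LinearMap.ker p ≤ span F (c '' Y) := by
    intro w hw
    rw [pi_eq_sum_univ' w]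
    refine sum_mem fun a _ => ?_
    by_cases ha : (a : V) ∈ Y
    · exact smul_mem _ _ (subset_span ⟨a, ha, repMatrix_col_of_mem G a.2⟩)
    · rw [show w a = 0 from congrFun hw ⟨a, a.2, ha⟩, zero_smul]
      exact zero_mem _
  have hkerdim : finrank F (LinearMap.ker p) = (A ∩ Y).ncard := by
    have hsurj := LinearMap.funLeft_surjective_of_injective F F _ (inclusion_injective
      (sdiff_subset : A \ Y ⊆ A))
    have := p.finrank_range_add_finrank_ker
    rw [LinearMap.range_eq_top.2 hsurj, finrank_top, finrank_fintype_fun_eq_card,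
      finrank_fintype_fun_eq_card] at this
    have hcard := ncard_inter_add_ncard_sdiff_eq_ncard A Y
    simp only [← Nat.card_coe_set_eq, Nat.card_eq_fintype_card] at hcard ⊢
    omega
  rw [← finrank_map_add_finrank_inf_ker _ p, hmap, inf_eq_right.2 hker, hkerdim,
    rkSub_eq_finrank_span, add_comm]

theorem cutrk_eq_rkSub (G : Matrix V V F) (X : Set V) : cutrk G X = rkSub G X Xᶜ := by
  unfold cutrk rkSub
  convert rfl

theorem cutrk_add_one_eq_matroidConn {G : Matrix V V F} {A : Set V} (hG : IsSkewBipartite G A)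
    {M : Matroid V} (hM : IsColMatroid M (repMatrix G A)) (X : Set V) :
    cutrk G X + 1 = matroidConn M X := by
  have hr : ∀ Y, mrank M Y = (A ∩ Y).ncard + rkSub G (A \ Y) (Y \ A) := fun Y =>
    (hM.mrank_eq Y).trans (finrank_span_image_repMatrix_col G A Y)
  have hcut : cutrk G X = rkSub G (A ∩ X) (Xᶜ \ A) + rkSub G (A \ X) (X \ A) := by
    rw [cutrk_eq_rkSub, rkSub_eq_add_of_bipartite hG.2.2, rkSub_comm_of_skew hG.2.1 (X \ A),
      inter_comm X A, inter_comm Xᶜ A, ← sdiff_eq]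
  have hempty : rkSub G (A \ univ) (univ \ A) = 0 := by
    rw [sdiff_univ, rkSub_eq_finrank_span]
    exact finrank_zero_of_subsingleton
  have hcard := ncard_inter_add_ncard_sdiff_eq_ncard A X
  rw [matroidConn, hM.1, ← compl_eq_univ_sdiff, hr, hr, hr, hcut, hempty, inter_univ,
    Set.sdiff_compl, ← Set.sdiff_eq]
  omega

theorem matroidPW_eq_lrw_add_one {G : Matrix V V F} {M : Matroid V} (hE : M.E = univ)
    (hV : 2 ≤ Fintype.card V) (hconn : ∀ X, cutrk G X + 1 = matroidConn M X) :
    matroidPW M = lrw G + 1 := by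
  have hcard : Nat.card M.E = Fintype.card V := by
    rw [hE, Nat.card_univ, Nat.card_eq_fintype_card]
  have hIco : Finset.Ico 1 (Nat.card M.E) = Finset.Ico 1 (Fintype.card V) := by rw [hcard]
  let e : M.E ≃ V := (Equiv.setCongr hE).trans (Equiv.Set.univ V)
  have : Nonempty (V ≃ Fin (Fintype.card V)) := ⟨Fintype.equivFin V⟩
  rw [lrw, ← Nat.iInf_add_one]
  refine Equiv.iInf_congr (e.equivCongr (finCongr hcard)) fun π => ?_
  rw [layoutWidth, Finset.sup_add (Finset.nonempty_Ico.2 (by omega)), hIco]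
  refine Finset.sup_congr rfl fun i _ => ?_
  rw [hconn]
  congr 1
  ext v
  exact ⟨fun h => ⟨hE ▸ mem_univ v, h⟩, fun ⟨_, h⟩ => h⟩

end Graph

/-- For a skew-symmetric bipartite F*-graph `G` with bipartition
`(A, Aᶜ)` and `M := M_F(G, A, Aᶜ)`: for every set `X` of vertices,
`cutrk_G(X) = λ_M(X) − 1`; consequently, if there are at least two vertices then
`lrw(G) = pw(M) − 1`. -/
theorem fundamental_graph_conn_and_pathwidth {F V : Type} [Field F] [Fintype V]
    (G : Matrix V V F) (A : Set V) (hG : IsSkewBipartite G A)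
    (M : Matroid V) (hM : IsColMatroid M (repMatrix G A)) :
    (∀ X : Set V, cutrk G X + 1 = matroidConn M X) ∧
    (2 ≤ Fintype.card V → lrw G + 1 = matroidPW M) := by
  have hconn := cutrk_add_one_eq_matroidConn hG hM
  exact ⟨hconn, fun hV => (matroidPW_eq_lrw_add_one hM.1 hV hconn).symm⟩
end

section
/- Let F be a field, G a skew-symmetric bipartite F*-graph with bipartition (A,B), M := M_F(G,A,B), and x ∈ A, y ∈ B with M_G[x,y] ≠ 0. Then the pivots G∧xy and G∧yx are skew-symmetric bipartite F*-graphs with respect to the bipartition (AΔ{x,y}, BΔ{x,y}), and M_F(G∧xy, AΔ{x,y}, BΔ{x,y}) = M and M_F(G∧yx, AΔ{x,y}, BΔ{x,y}) = M. -/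
open Classical

open Classical

/-! ### Auxiliary lemmas for the proof of `fundamental_graph_pivot` -/

section PivotEntries
variable {F V : Type} [Field F] (σ : F → F) (M : Matrix V V F) (x y s u : V)

lemma pivot_diag : pivotComp σ M x y s s = 0 := by simp [pivotComp]

lemma pivot_xy (h : x ≠ y) : pivotComp σ M x y x y = -1 / M y x := by
  simp [pivotComp, h, h.symm]

lemma pivot_yx (h : x ≠ y) : pivotComp σ M x y y x = -(σ 1) ^ 2 / M x y := by
  simp [pivotComp, h, h.symm]

lemma pivot_rowx (h : x ≠ y) (h1 : u ≠ x) (h2 : u ≠ y) :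
    pivotComp σ M x y x u = M y u / M y x := by
  simp [pivotComp, h, h.symm, h1, h1.symm, h2, h2.symm]

lemma pivot_rowy (h : x ≠ y) (h1 : u ≠ x) (h2 : u ≠ y) :
    pivotComp σ M x y y u = σ 1 * M x u / M x y := by
  simp [pivotComp, h, h.symm, h1, h1.symm, h2, h2.symm]

lemma pivot_colx (h : x ≠ y) (h1 : s ≠ x) (h2 : s ≠ y) :
    pivotComp σ M x y s x = σ 1 * M s y / M x y := by
  simp [pivotComp, h, h.symm, h1, h1.symm, h2, h2.symm]

lemma pivot_coly (h : x ≠ y) (h1 : s ≠ x) (h2 : s ≠ y) :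
    pivotComp σ M x y s y = M s x / M y x := by
  simp [pivotComp, h, h.symm, h1, h1.symm, h2, h2.symm]

lemma pivot_gen (h0 : s ≠ u) (h1 : s ≠ x) (h2 : s ≠ y) (h3 : u ≠ x) (h4 : u ≠ y) :
    pivotComp σ M x y s u = M s u - M s x * M y u / M y x - M s y * M x u / M x y := by
  simp [pivotComp, h0, h1, h2, h3, h4]

end PivotEntries

section Transfer

lemma units_smul_linindep_iff {F ι W : Type} [Field F] [AddCommGroup W] [Module F W]
    (c : ι → F) (hc : ∀ i, c i ≠ 0) (v : ι → W) :
    LinearIndependent F (fun i => c i • v i) ↔ LinearIndependent F v := by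
  constructor
  · intro h
    have h2 := h.units_smul (fun i => (Units.mk0 (c i) (hc i))⁻¹)
    have e : ((fun i => (Units.mk0 (c i) (hc i))⁻¹) • fun i => c i • v i) = v := by
      funext i
      simp [Pi.smul_apply', Units.smul_def, smul_smul, inv_mul_cancel₀ (hc i)]
    rwa [e] at h2
  · intro h
    have h2 := h.units_smul (fun i => Units.mk0 (c i) (hc i))
    have e : ((fun i => Units.mk0 (c i) (hc i)) • v) = fun i => c i • v i := by
      funext i; simp [Pi.smul_apply', Units.smul_def]
    rwa [e] at h2

lemma colMatroid_transfer {F V : Type} [Field F] {A A' : Set V}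
    (M : Matroid V) (rep : Matrix ↥A V F) (rep' : Matrix ↥A' V F)
    (T : (↥A → F) →ₗ[F] (↥A' → F)) (hT : Function.Injective T)
    (c : V → F) (hc : ∀ v, c v ≠ 0)
    (h : ∀ v : V, (fun a' => rep' a' v) = c v • T (fun a => rep a v))
    (hM : IsColMatroid M rep) : IsColMatroid M rep' := by
  obtain ⟨hE, hI⟩ := hM
  refine ⟨hE, fun I => ?_⟩
  rw [hI I]
  have hker : LinearMap.ker T = ⊥ := LinearMap.ker_eq_bot.mpr hT
  have hrw : (fun i : I => fun a' : ↥A' => rep' a' i)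
      = fun i : I => c i • T (fun a => rep a i) := by
    funext i; exact h i
  rw [hrw, units_smul_linindep_iff (fun i : I => c i) (fun i => hc i)
    (fun i : I => T (fun a => rep a i))]
  constructor
  · intro hli
    exact hli.map' T hker
  · intro hli
    exact LinearIndependent.of_comp T hli

noncomputable def auxT {F V : Type} [Field F] (A A' : Set V) (x : V) (hx : x ∈ A) (α : V → F) :
    (↥A → F) →ₗ[F] (↥A' → F) where
  toFun f := fun a' => (if h : (a' : V) ∈ A then f ⟨a', h⟩ else 0) + α a' * f ⟨x, hx⟩
  map_add' f g := by
    funext a'; by_cases h : (a' : V) ∈ A <;> simp [h] <;> ring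
  map_smul' m f := by
    funext a'; by_cases h : (a' : V) ∈ A <;> simp [h] <;> ring

lemma auxT_apply {F V : Type} [Field F] (A A' : Set V) (x : V) (hx : x ∈ A) (α : V → F)
    (f : ↥A → F) (a' : ↥A') :
    auxT A A' x hx α f a'
      = (if h : (a' : V) ∈ A then f ⟨a', h⟩ else 0) + α a' * f ⟨x, hx⟩ := rfl

lemma auxT_injective {F V : Type} [Field F] (A A' : Set V) (x y : V) (hx : x ∈ A)
    (α : V → F) (hy' : y ∈ A') (hyA : y ∉ A) (hα : α y ≠ 0)
    (hAA' : ∀ a ∈ A, a ≠ x → a ∈ A') :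
    Function.Injective (auxT A A' x hx α) := by
  rw [← LinearMap.ker_eq_bot, LinearMap.ker_eq_bot']
  intro f hf
  have hfx : f ⟨x, hx⟩ = 0 := by
    have := congrFun hf ⟨y, hy'⟩
    simp [auxT, hyA] at this
    rcases this with h | h
    · exact absurd h hα
    · exact h
  funext a
  by_cases hax : (a : V) = x
  · rw [show a = ⟨x, hx⟩ from Subtype.ext hax]; exact hfx
  · have ha' : (a : V) ∈ A' := hAA' a a.2 hax
    have := congrFun hf ⟨a, ha'⟩
    simpa [auxT, a.2, hfx] using this

def diagMap {F V : Type} [Field F] (A' : Set V) (d : V → F) :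
    (↥A' → F) →ₗ[F] (↥A' → F) where
  toFun f := fun a' => d a' * f a'
  map_add' f g := by funext a'; simp; ring
  map_smul' m f := by funext a'; simp; ring

lemma diagMap_apply {F V : Type} [Field F] (A' : Set V) (d : V → F) (f : ↥A' → F)
    (a' : ↥A') : diagMap A' d f a' = d a' * f a' := rfl

lemma diagMap_injective {F V : Type} [Field F] (A' : Set V) (d : V → F)
    (hd : ∀ v, d v ≠ 0) : Function.Injective (diagMap A' d) := by
  rw [← LinearMap.ker_eq_bot, LinearMap.ker_eq_bot']
  intro f hf
  funext a'
  have := congrFun hf a'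
  simp [diagMap] at this
  rcases this with h | h
  · exact absurd h (hd a')
  · exact h

end Transfer

/-- Let `G` be a skew-symmetric bipartite F*-graph with bipartition
`(A, Aᶜ)`, `M := M_F(G, A, Aᶜ)`, `x ∈ A`, `y ∈ Aᶜ` and `M_G[x,y] ≠ 0`. Then `G∧xy` and
`G∧yx` are skew-symmetric bipartite with respect to the bipartition
`(A ∆ {x,y}, Aᶜ ∆ {x,y})`, and both have fundamental matroid `M`.
(For skew-symmetric graphs the sesqui-morphism is `σ = -·`.) -/
theorem fundamental_graph_pivot {F V : Type} [Field F] [Fintype V]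
    (G : Matrix V V F) (A : Set V) (hG : IsSkewBipartite G A)
    (M : Matroid V) (hM : IsColMatroid M (repMatrix G A))
    (x y : V) (hx : x ∈ A) (hy : y ∉ A) (hxy : G x y ≠ 0) :
    IsSkewBipartite (pivotComp (fun a => -a) G x y) (symmDiff A {x, y}) ∧
    IsSkewBipartite (pivotComp (fun a => -a) G y x) (symmDiff A {x, y}) ∧
    IsColMatroid M (repMatrix (pivotComp (fun a => -a) G x y) (symmDiff A {x, y})) ∧
    IsColMatroid M (repMatrix (pivotComp (fun a => -a) G y x) (symmDiff A {x, y})) := by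
  obtain ⟨hd, hsk, hbip⟩ := hG
  set σ : F → F := fun a => -a with hσdef
  have hσ1 : σ 1 = -1 := rfl
  have hne : x ≠ y := fun h => hy (h ▸ hx)
  have hq : G x y ≠ 0 := hxy
  have hGyx : G y x = -G x y := hsk y x
  set A' := symmDiff A ({x, y} : Set V) with hA'def
  have hyA' : y ∈ A' := by
    rw [hA'def, Set.mem_symmDiff]; right; exact ⟨by simp, hy⟩
  have hxA' : x ∉ A' := by
    rw [hA'def, Set.mem_symmDiff]
    rintro (⟨-, h⟩ | ⟨-, h⟩)
    · exact h (by simp)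
    · exact h hx
  have hmem : ∀ v, v ≠ x → v ≠ y → (v ∈ A' ↔ v ∈ A) := by
    intro v h1 h2
    rw [hA'def, Set.mem_symmDiff]
    simp [h1, h2]
  -- Skew-symmetry of the first pivot
  have hskew1 : ∀ s u, pivotComp σ G x y s u = - pivotComp σ G x y u s := by
    intro s u
    by_cases hsu : s = u
    · rw [hsu, pivot_diag]; ring
    by_cases hsx : s = x
    · rw [hsx]
      by_cases huy : u = y
      · rw [huy, pivot_xy σ G x y hne, pivot_yx σ G x y hne, hGyx, hσ1]
        simp only [div_neg, neg_neg]; ring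
      · have hux : u ≠ x := fun h => hsu (hsx.trans h.symm)
        rw [pivot_rowx σ G x y u hne hux huy, pivot_colx σ G x y u hne hux huy,
          hσ1, hsk u y, hGyx]
        simp only [div_neg, neg_neg]; ring
    by_cases hsy : s = y
    · rw [hsy]
      by_cases hux : u = x
      · rw [hux, pivot_yx σ G x y hne, pivot_xy σ G x y hne, hGyx, hσ1]
        simp only [div_neg, neg_neg]; ring
      · have huy : u ≠ y := fun h => hsu (hsy.trans h.symm)
        rw [pivot_rowy σ G x y u hne hux huy, pivot_coly σ G x y u hne hux huy,
          hσ1, hsk u x, hGyx]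
        simp only [div_neg, neg_neg]; ring
    by_cases hux : u = x
    · rw [hux, pivot_colx σ G x y s hne hsx hsy, pivot_rowx σ G x y s hne hsx hsy,
        hσ1, hsk y s, hGyx]
      simp only [div_neg, neg_neg]; ring
    by_cases huy : u = y
    · rw [huy, pivot_coly σ G x y s hne hsx hsy, pivot_rowy σ G x y s hne hsx hsy,
        hσ1, hsk x s, hGyx]
      simp only [div_neg, neg_neg]; ring
    · rw [pivot_gen σ G x y s u hsu hsx hsy hux huy,
        pivot_gen σ G x y u s (fun h => hsu h.symm) hux huy hsx hsy,
        hsk u s, hsk u x, hsk u y, hsk y s, hsk x s, hGyx]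
      simp only [div_neg, neg_neg, neg_mul, mul_neg]; ring
  -- Bipartite condition for the first pivot
  have hzero1 : ∀ s u : V, ((s ∈ A' ∧ u ∈ A') ∨ (s ∉ A' ∧ u ∉ A')) →
      pivotComp σ G x y s u = 0 := by
    intro s u h
    by_cases hsu : s = u
    · rw [hsu]; exact pivot_diag σ G x y u
    by_cases hsx : s = x
    · by_cases huy : u = y
      · rcases h with ⟨h1, -⟩ | ⟨-, h2⟩
        · exact absurd (hsx ▸ h1) hxA'
        · exact absurd hyA' (huy ▸ h2)
      · have hux : u ≠ x := fun h => hsu (hsx.trans h.symm)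
        have huA : u ∉ A := by
          rcases h with ⟨h1, -⟩ | ⟨-, h2⟩
          · exact absurd (hsx ▸ h1) hxA'
          · exact fun hu => h2 ((hmem u hux huy).mpr hu)
        rw [hsx, pivot_rowx σ G x y u hne hux huy, hbip y u (Or.inr ⟨hy, huA⟩),
          zero_div]
    by_cases hsy : s = y
    · by_cases hux : u = x
      · rcases h with ⟨-, h2⟩ | ⟨h1, -⟩
        · exact absurd (hux ▸ h2) hxA'
        · exact absurd hyA' (hsy ▸ h1)
      · have huy : u ≠ y := fun h => hsu (hsy.trans h.symm)
        have huA : u ∈ A := by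
          rcases h with ⟨-, h2⟩ | ⟨h1, -⟩
          · exact (hmem u hux huy).mp h2
          · exact absurd hyA' (hsy ▸ h1)
        rw [hsy, pivot_rowy σ G x y u hne hux huy, hbip x u (Or.inl ⟨hx, huA⟩)]
        simp
    by_cases hux : u = x
    · have hsA : s ∉ A := by
        rcases h with ⟨-, h2⟩ | ⟨h1, -⟩
        · exact absurd (hux ▸ h2) hxA'
        · exact fun hs => h1 ((hmem s hsx hsy).mpr hs)
      rw [hux, pivot_colx σ G x y s hne hsx hsy, hbip s y (Or.inr ⟨hsA, hy⟩)]
      simp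
    by_cases huy : u = y
    · have hsA : s ∈ A := by
        rcases h with ⟨h1, -⟩ | ⟨-, h2⟩
        · exact (hmem s hsx hsy).mp h1
        · exact absurd hyA' (huy ▸ h2)
      rw [huy, pivot_coly σ G x y s hne hsx hsy, hbip s x (Or.inl ⟨hsA, hx⟩),
        zero_div]
    · rcases h with ⟨h1, h2⟩ | ⟨h1, h2⟩
      · have hsA : s ∈ A := (hmem s hsx hsy).mp h1
        have huA : u ∈ A := (hmem u hux huy).mp h2
        rw [pivot_gen σ G x y s u hsu hsx hsy hux huy,
          hbip s u (Or.inl ⟨hsA, huA⟩), hbip s x (Or.inl ⟨hsA, hx⟩),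
          hbip x u (Or.inl ⟨hx, huA⟩)]
        ring
      · have hsA : s ∉ A := fun hs => h1 ((hmem s hsx hsy).mpr hs)
        have huA : u ∉ A := fun hu => h2 ((hmem u hux huy).mpr hu)
        rw [pivot_gen σ G x y s u hsu hsx hsy hux huy,
          hbip s u (Or.inr ⟨hsA, huA⟩), hbip y u (Or.inr ⟨hy, huA⟩),
          hbip s y (Or.inr ⟨hsA, hy⟩)]
        ring
  have hsb1 : IsSkewBipartite (pivotComp σ G x y) A' :=
    ⟨fun s => pivot_diag σ G x y s, hskew1, hzero1⟩
  -- the sign function relating the two pivots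
  set ε : V → F := fun v => if v = x ∨ v = y then -1 else 1 with hεdef
  have hεx : ε x = -1 := by simp [hεdef]
  have hεy : ε y = -1 := by simp [hεdef]
  have hεo : ∀ v, v ≠ x → v ≠ y → ε v = 1 := by
    intro v h1 h2; simp [hεdef, h1, h2]
  have hεne : ∀ v, ε v ≠ 0 := by
    intro v; rw [hεdef]; dsimp only; split <;> norm_num
  have hεsq : ∀ v, ε v * ε v = 1 := by
    intro v; rw [hεdef]; dsimp only; split <;> norm_num
  -- relation between the two pivots
  have hEps : ∀ s u, pivotComp σ G y x s u = ε s * ε u * pivotComp σ G x y s u := by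
    intro s u
    by_cases hsu : s = u
    · rw [hsu, pivot_diag, pivot_diag]; ring
    by_cases hsx : s = x
    · by_cases huy : u = y
      · rw [hsx, huy, pivot_yx σ G y x hne.symm, pivot_xy σ G x y hne, hσ1, hεx, hεy]
        ring
      · have hux : u ≠ x := fun h => hsu (hsx.trans h.symm)
        rw [hsx, pivot_rowy σ G y x u hne.symm huy hux,
          pivot_rowx σ G x y u hne hux huy, hσ1, hεx, hεo u hux huy]
        ring
    by_cases hsy : s = y
    · by_cases hux : u = x
      · rw [hsy, hux, pivot_xy σ G y x hne.symm, pivot_yx σ G x y hne, hσ1, hεx, hεy]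
        ring
      · have huy : u ≠ y := fun h => hsu (hsy.trans h.symm)
        rw [hsy, pivot_rowx σ G y x u hne.symm huy hux,
          pivot_rowy σ G x y u hne hux huy, hσ1, hεy, hεo u hux huy]
        ring
    by_cases hux : u = x
    · rw [hux, pivot_coly σ G y x s hne.symm hsy hsx, pivot_colx σ G x y s hne hsx hsy,
        hσ1, hεx, hεo s hsx hsy]
      ring
    by_cases huy : u = y
    · rw [huy, pivot_colx σ G y x s hne.symm hsy hsx, pivot_coly σ G x y s hne hsx hsy,
        hσ1, hεy, hεo s hsx hsy]
      ring
    · rw [pivot_gen σ G y x s u hsu hsy hsx huy hux,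
        pivot_gen σ G x y s u hsu hsx hsy hux huy,
        hεo s hsx hsy, hεo u hux huy]
      ring
  have hsb2 : IsSkewBipartite (pivotComp σ G y x) A' := by
    refine ⟨fun s => pivot_diag σ G y x s, fun s u => ?_, fun s u h => ?_⟩
    · rw [hEps s u, hEps u s, hskew1 s u]; ring
    · rw [hEps s u, hzero1 s u h, mul_zero]
  -- First matroid transfer
  set α₁ : V → F := fun v => if v = y then -1 / G x y else -(G v y) / G x y with hα₁def
  have hα₁y : α₁ y = -1 / G x y := by simp [hα₁def]
  have hα₁o : ∀ v, v ≠ y → α₁ v = -(G v y) / G x y := by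
    intro v h; simp [hα₁def, h]
  set c₁ : V → F := fun v => if v = y then -1 else 1 with hc₁def
  have hc₁ : ∀ v, c₁ v ≠ 0 := by
    intro v; rw [hc₁def]; dsimp only; split <;> norm_num
  have hc₁y : c₁ y = -1 := by simp [hc₁def]
  have hc₁o : ∀ v, v ≠ y → c₁ v = 1 := by intro v h; simp [hc₁def, h]
  have hT₁ : Function.Injective (auxT A A' x hx α₁) := by
    refine auxT_injective A A' x y hx α₁ hyA' hy ?_ ?_
    · rw [hα₁y]
      exact div_ne_zero (neg_ne_zero.mpr one_ne_zero) hq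
    · intro a ha hax
      have hay : a ≠ y := fun h => hy (h ▸ ha)
      exact (hmem a hax hay).mpr ha
  have h₁ : ∀ v : V, (fun a' : ↥A' => repMatrix (pivotComp σ G x y) A' a' v)
      = c₁ v • (auxT A A' x hx α₁) (fun a : ↥A => repMatrix G A a v) := by
    intro v
    funext a'
    obtain ⟨b, hb⟩ := a'
    have hbx : b ≠ x := fun h => hxA' (h ▸ hb)
    rw [Pi.smul_apply, smul_eq_mul, auxT_apply]
    by_cases hvx : v = x
    · rw [hvx, hc₁o x hne]
      by_cases hby : b = y
      · simp only [repMatrix, Matrix.of_apply, if_neg hxA', hby, hα₁y,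
          dif_neg hy, if_pos hx, if_pos rfl]
        rw [pivot_yx σ G x y hne, hσ1]
        simp
      · have hbA : b ∈ A := (hmem b hbx hby).mp hb
        simp only [repMatrix, Matrix.of_apply, if_neg hxA', dif_pos hbA,
          if_pos hx, if_neg hbx, if_pos rfl, hα₁o b hby]
        rw [pivot_colx σ G x y b hne hbx hby, hσ1]
        simp
    by_cases hvy : v = y
    · rw [hvy, hc₁y]
      by_cases hby : b = y
      · simp only [repMatrix, Matrix.of_apply, if_pos hyA', hby, if_pos rfl, hα₁y,
          if_neg hy, dif_neg hy]
        field_simp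
        norm_num
      · have hbA : b ∈ A := (hmem b hbx hby).mp hb
        simp only [repMatrix, Matrix.of_apply, if_pos hyA', if_neg hby,
          dif_pos hbA, if_neg hy, hα₁o b hby]
        field_simp
        norm_num
    by_cases hvA : v ∈ A
    · have hvA' : v ∈ A' := (hmem v hvx hvy).mpr hvA
      rw [hc₁o v hvy]
      have hxv : (x : V) ≠ v := fun h => hvx h.symm
      by_cases hby : b = y
      · have hyv : y ≠ v := fun h => hvy h.symm
        simp only [repMatrix, Matrix.of_apply, if_pos hvA', if_pos hvA,
          hby, dif_neg hy, if_neg hxv, if_neg hyv]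
        ring
      · have hbA : b ∈ A := (hmem b hbx hby).mp hb
        simp only [repMatrix, Matrix.of_apply, if_pos hvA', if_pos hvA,
          dif_pos hbA, if_neg hxv]
        ring
    · have hvA' : v ∉ A' := fun h => hvA ((hmem v hvx hvy).mp h)
      rw [hc₁o v hvy]
      by_cases hby : b = y
      · simp only [repMatrix, Matrix.of_apply, if_neg hvA', if_neg hvA,
          hby, dif_neg hy, hα₁y]
        rw [pivot_rowy σ G x y v hne (fun h => hvx h) (fun h => hvy h), hσ1]
        ring
      · have hbA : b ∈ A := (hmem b hbx hby).mp hb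
        have hbv : b ≠ v := fun h => hvA (h ▸ hbA)
        simp only [repMatrix, Matrix.of_apply, if_neg hvA', if_neg hvA,
          dif_pos hbA, hα₁o b hby]
        rw [pivot_gen σ G x y b v hbv hbx hby (fun h => hvx h) (fun h => hvy h),
          hbip b x (Or.inl ⟨hbA, hx⟩)]
        ring
  have hcol1 : IsColMatroid M (repMatrix (pivotComp σ G x y) A') :=
    colMatroid_transfer M (repMatrix G A) (repMatrix (pivotComp σ G x y) A')
      (auxT A A' x hx α₁) hT₁ c₁ hc₁ h₁ hM
  -- Second matroid transfer
  have h₂ : ∀ v : V, (fun a' : ↥A' => repMatrix (pivotComp σ G y x) A' a' v)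
      = ε v • (diagMap A' ε) (fun a' : ↥A' => repMatrix (pivotComp σ G x y) A' a' v) := by
    intro v
    funext a'
    rw [Pi.smul_apply, smul_eq_mul, diagMap_apply]
    by_cases hvA' : v ∈ A'
    · simp only [repMatrix, Matrix.of_apply, if_pos hvA']
      by_cases hav : (a' : V) = v
      · rw [if_pos hav, hav, mul_one, hεsq v]
      · rw [if_neg hav]; ring
    · simp only [repMatrix, Matrix.of_apply, if_neg hvA']
      rw [hEps a' v]
      ring
  have hcol2 : IsColMatroid M (repMatrix (pivotComp σ G y x) A') :=
    colMatroid_transfer M (repMatrix (pivotComp σ G x y) A')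
      (repMatrix (pivotComp σ G y x) A') (diagMap A' ε)
      (diagMap_injective A' ε hεne) ε hεne h₂ hcol1
  exact ⟨hsb1, hsb2, hcol1, hcol2⟩
end

section
/- Let F be a field and let G be a skew-symmetric bipartite F*-graph with bipartition (A,B). If G' is a pivot-minor of G, then G' is a skew-symmetric bipartite F*-graph and there is a bipartition (A',B') of the vertex set of G' such that M_F(G',A',B') is isomorphic to a minor of M_F(G,A,B). -/
open Classical

open Classical

noncomputable section AuxProof

lemma sum_subtype_univ {M E : Type} [AddCommMonoid M] [Fintype E] (I : Set E) (f : E → M)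
    (hf : ∀ v, v ∉ I → f v = 0) : ∑ i : I, f i = ∑ v, f v := by
  classical
  rw [← Finset.sum_subtype I.toFinset (fun x => Set.mem_toFinset) f]
  exact Finset.sum_subset (Finset.subset_univ _)
    (fun x _ hx => hf x (fun h => hx (Set.mem_toFinset.2 h)))

lemma li_iff_g {F E R : Type} [Field F] [Fintype E] (c : E → R → F) (I : Set E) :
    LinearIndependent F (fun i : I => c i) ↔
      ∀ g : E → F, (∀ v, v ∉ I → g v = 0) → (∀ r, ∑ v, g v * c v r = 0) → ∀ v, g v = 0 := by
  classical
  rw [Fintype.linearIndependent_iff]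
  constructor
  · intro H g hsupp hrows v
    by_cases hv : v ∈ I
    · refine H (fun i => g i) ?_ ⟨v, hv⟩
      have hsum : ∑ i : I, (fun w => g w • c w) i = ∑ w, g w • c w :=
        sum_subtype_univ I (fun w => g w • c w)
          (fun w hw => by show g w • c w = 0; rw [hsupp w hw, zero_smul])
      refine Eq.trans (by exact hsum) ?_
      funext r
      rw [Finset.sum_apply]
      simpa using hrows r
    · exact hsupp v hv
  · intro H g hg i
    set gE : E → F := fun v => if h : v ∈ I then g ⟨v, h⟩ else 0 with hgE
    have hsupp : ∀ v, v ∉ I → gE v = 0 := fun v hv => dif_neg hv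
    have hrows : ∀ r, ∑ v, gE v * c v r = 0 := by
      intro r
      have hsum : ∑ i : I, (fun w => gE w * c w r) i = ∑ w, gE w * c w r :=
        sum_subtype_univ I (fun w => gE w * c w r)
          (fun w hw => by show gE w * c w r = 0; rw [hsupp w hw, zero_mul])
      rw [← hsum]
      have he : ∀ i : I, gE i * c i r = g i * c i r := by
        intro j; simp [hgE, j.2]
      rw [Finset.sum_congr rfl (fun j _ => he j)]
      have := congrFun hg r
      rw [Finset.sum_apply] at this
      simpa using this
    have := H gE hsupp hrows i
    simpa [hgE, i.2] using this

namespace PivotFacts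
variable {F V : Type} [Field F]

lemma pc_diag (M : Matrix V V F) (x y s : V) : pivotComp (fun a : F => -a) M x y s s = 0 := by
  simp [pivotComp]

lemma pc_xy (M : Matrix V V F) {x y : V} (hxy : x ≠ y) :
    pivotComp (fun a : F => -a) M x y x y = -1 / M y x := by simp [pivotComp, hxy]

lemma pc_yx (M : Matrix V V F) {x y : V} (hxy : x ≠ y) :
    pivotComp (fun a : F => -a) M x y y x = -1 / M x y := by
  simp [pivotComp, hxy, hxy.symm]

lemma pc_xu (M : Matrix V V F) {x y u : V} (hxy : x ≠ y) (hux : u ≠ x) (huy : u ≠ y) :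
    pivotComp (fun a : F => -a) M x y x u = M y u / M y x := by
  simp [pivotComp, hxy, hux, huy, hux.symm, huy.symm]

lemma pc_yu (M : Matrix V V F) {x y u : V} (hxy : x ≠ y) (hux : u ≠ x) (huy : u ≠ y) :
    pivotComp (fun a : F => -a) M x y y u = -(M x u) / M x y := by
  simp [pivotComp, hxy, hxy.symm, hux, huy, hux.symm, huy.symm, neg_div]

lemma pc_sx (M : Matrix V V F) {x y s : V} (hxy : x ≠ y) (hsx : s ≠ x) (hsy : s ≠ y) :
    pivotComp (fun a : F => -a) M x y s x = -(M s y) / M x y := by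
  simp [pivotComp, hxy, hxy.symm, hsx, hsy, neg_div]

lemma pc_sy (M : Matrix V V F) {x y s : V} (hxy : x ≠ y) (hsx : s ≠ x) (hsy : s ≠ y) :
    pivotComp (fun a : F => -a) M x y s y = M s x / M y x := by
  simp [pivotComp, hxy, hxy.symm, hsx, hsy]

lemma pc_gen (M : Matrix V V F) {x y s u : V} (hsu : s ≠ u) (hsx : s ≠ x) (hsy : s ≠ y)
    (hux : u ≠ x) (huy : u ≠ y) :
    pivotComp (fun a : F => -a) M x y s u
      = M s u - M s x * M y u / M y x - M s y * M x u / M x y := by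
  simp [pivotComp, hsu, hsx, hsy, hux, huy]

lemma pc_skew (M : Matrix V V F) {x y : V} (hxy : x ≠ y)
    (hskew : ∀ s u, M s u = - M u s) (hMxy : M x y ≠ 0) :
    ∀ s u, pivotComp (fun a : F => -a) M x y s u = - pivotComp (fun a : F => -a) M x y u s := by
  have hyx : M y x = - M x y := hskew y x
  have hMyx : M y x ≠ 0 := by rw [hyx]; exact neg_ne_zero.2 hMxy
  intro s u
  by_cases hsu : s = u
  · rw [hsu, pc_diag]; ring
  by_cases hsx : s = x
  · by_cases huy : u = y
    · rw [hsx, huy, pc_xy M hxy, pc_yx M hxy]; field_simp [hyx]; linear_combination -hyx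
    · have hux : u ≠ x := fun h => hsu (hsx.trans h.symm)
      rw [hsx, pc_xu M hxy hux huy, pc_sx M hxy hux huy, hskew y u, hyx]
      field_simp
  by_cases hsy : s = y
  · by_cases hux : u = x
    · rw [hsy, hux, pc_yx M hxy, pc_xy M hxy]; field_simp [hyx]; linear_combination -hyx
    · have huy : u ≠ y := fun h => hsu (hsy.trans h.symm)
      rw [hsy, pc_yu M hxy hux huy, pc_sy M hxy hux huy, hskew x u, hyx]
      field_simp
  by_cases hux : u = x
  · rw [hux, pc_sx M hxy hsx hsy, pc_xu M hxy hsx hsy, hskew y s, hyx]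
    field_simp
  by_cases huy : u = y
  · rw [huy, pc_sy M hxy hsx hsy, pc_yu M hxy hsx hsy, hskew x s, hyx]
    rw [div_neg, neg_neg]
  · rw [pc_gen M hsu hsx hsy hux huy, pc_gen M (fun h => hsu h.symm) hux huy hsx hsy,
      hskew u s, hskew u x, hskew u y, hskew y s, hskew x s, hyx]
    rw [div_neg, div_neg]
    field_simp
    ring

end PivotFacts
def gIndep {F V : Type} [Field F] [Fintype V] (c : V → V → F) (A I : Set V) : Prop :=
  ∀ g : V → F, (∀ v, v ∉ I → g v = 0) →
    (∀ a, a ∈ A → ∑ v, g v * c v a = 0) → ∀ v, g v = 0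

lemma li_transfer_one {F V : Type} [Field F] [Fintype V]
    (c c' : V → V → F) (A A' : Set V) (p q : V) (κ : F) (α d : V → F)
    (hqA' : q ∈ A') (hAA' : A \ {p} = A' \ {q})
    (hκ : κ ≠ 0) (hd : ∀ v, d v * d v = 1)
    (hent : ∀ v a', a' ∈ A' →
      c' v a' = d v * (if a' = q then κ * c v p else c v a' + α a' * c v p))
    (I : Set V) (hLI : gIndep c A I) : gIndep c' A' I := by
  intro g hsupp hrows
  set g₁ : V → F := fun v => g v * d v with hg₁
  have hSp : ∑ v, g₁ v * c v p = 0 := by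
    have h0 := hrows q hqA'
    have he : ∑ v, g v * c' v q = κ * ∑ v, g₁ v * c v p := by
      rw [Finset.mul_sum]
      refine Finset.sum_congr rfl fun v _ => ?_
      rw [hent v q hqA', if_pos rfl, hg₁]; ring
    rw [he] at h0
    exact (mul_eq_zero.1 h0).resolve_left hκ
  have hrowsA : ∀ a, a ∈ A → ∑ v, g₁ v * c v a = 0 := by
    intro a haA
    by_cases hap : a = p
    · rw [hap]; exact hSp
    · have haAq : a ∈ A' \ {q} := by rw [← hAA']; exact ⟨haA, hap⟩
      have h0 := hrows a haAq.1
      have hsplit : ∑ v, g v * c' v a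
          = (∑ v, g₁ v * c v a) + α a * ∑ v, g₁ v * c v p := by
        rw [Finset.mul_sum, ← Finset.sum_add_distrib]
        refine Finset.sum_congr rfl fun v _ => ?_
        have haq : ¬(a = q) := fun h => haAq.2 (Set.mem_singleton_iff.mpr h)
        rw [hent v a haAq.1, if_neg haq, hg₁]; ring
      rw [hsplit, hSp, mul_zero, add_zero] at h0
      exact h0
  have hg₁0 := hLI g₁ (fun v hv => by rw [hg₁]; simp only; rw [hsupp v hv, zero_mul]) hrowsA
  intro v
  calc g v = g v * (d v * d v) := by rw [hd v, mul_one]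
    _ = (g v * d v) * d v := by ring
    _ = 0 := by rw [show g v * d v = g₁ v from rfl, hg₁0 v, zero_mul]

lemma li_transfer_iff {F V : Type} [Field F] [Fintype V]
    (c c' : V → V → F) (A A' : Set V) (p q : V) (κ : F) (α d : V → F)
    (hpA : p ∈ A) (hqA' : q ∈ A') (hAA' : A \ {p} = A' \ {q})
    (hκ : κ ≠ 0) (hd : ∀ v, d v * d v = 1)
    (hent : ∀ v a', a' ∈ A' →
      c' v a' = d v * (if a' = q then κ * c v p else c v a' + α a' * c v p))
    (I : Set V) : gIndep c' A' I ↔ gIndep c A I := by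
  constructor
  · refine fun h => li_transfer_one c' c A' A q p κ⁻¹ (fun a => -(α a) * κ⁻¹) d hpA
      hAA'.symm (inv_ne_zero hκ) hd ?_ I h
    intro v a haA
    have hcq : c' v q = d v * (κ * c v p) := by rw [hent v q hqA', if_pos rfl]
    have hdd := hd v
    by_cases hap : a = p
    · rw [if_pos hap, hap, hcq]
      have he : d v * (κ⁻¹ * (d v * (κ * c v p))) = (d v * d v) * ((κ⁻¹ * κ) * c v p) := by
        ring
      rw [he, hdd, inv_mul_cancel₀ hκ]; ring
    · have haAq : a ∈ A' \ {q} := by rw [← hAA']; exact ⟨haA, hap⟩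
      have hca : c' v a = d v * (c v a + α a * c v p) := by
        have haq : ¬(a = q) := fun h => haAq.2 (Set.mem_singleton_iff.mpr h)
        rw [hent v a haAq.1, if_neg haq]
      rw [if_neg hap, hca, hcq]
      have he : d v * (d v * (c v a + α a * c v p) + -(α a) * κ⁻¹ * (d v * (κ * c v p)))
          = (d v * d v) * (c v a + α a * c v p - α a * ((κ⁻¹ * κ) * c v p)) := by ring
      rw [he, hdd, inv_mul_cancel₀ hκ]; ring
  · exact fun h => li_transfer_one c c' A A' p q κ α d hqA' hAA' hκ hd hent I h

noncomputable def colExt {F V : Type} [Field F] (M : Matrix V V F) (A : Set V) (v a : V) : F :=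
  if v ∈ A then (if a = v then 1 else 0) else M a v

open PivotFacts

lemma pivot_orient1 {F V : Type} [Field F] [Fintype V] {M : Matrix V V F} {A : Set V}
    (hM : IsSkewBipartite M A) {x y : V} (hx : x ∈ A) (hy : y ∉ A) (hMxy : M x y ≠ 0) :
    IsSkewBipartite (pivotComp (fun a : F => -a) M x y) (insert y (A \ {x})) ∧
      ∀ I : Set V,
        (gIndep (colExt (pivotComp (fun a : F => -a) M x y) (insert y (A \ {x})))
          (insert y (A \ {x})) I ↔ gIndep (colExt M A) A I) := by
  obtain ⟨hdiag, hskew, hblock⟩ := hM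
  have hxy : x ≠ y := fun h => hy (h ▸ hx)
  have hyx : M y x = - M x y := hskew y x
  have hMyx : M y x ≠ 0 := by rw [hyx]; exact neg_ne_zero.2 hMxy
  set A' : Set V := insert y (A \ {x}) with hA'
  set M' : Matrix V V F := pivotComp (fun a : F => -a) M x y with hM'
  have hyA' : y ∈ A' := Set.mem_insert _ _
  have hxA' : x ∉ A' := by
    intro h
    rcases Set.mem_insert_iff.1 h with h | h
    · exact hxy h
    · exact h.2 rfl
  have hmemA' : ∀ a, a ∈ A' ↔ (a = y ∨ (a ∈ A ∧ a ≠ x)) := by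
    intro a
    simp [hA', Set.mem_insert_iff, Set.mem_diff]
  -- blocks
  have hblocks' : ∀ s u : V, ((s ∈ A' ∧ u ∈ A') ∨ (s ∉ A' ∧ u ∉ A')) → M' s u = 0 := by
    intro s u h
    by_cases hsu : s = u
    · rw [hsu, hM']; exact pc_diag M x y u
    rcases h with ⟨hs, hu⟩ | ⟨hs, hu⟩
    · rcases (hmemA' s).1 hs with hsy | ⟨hsA, hsx⟩
      · rcases (hmemA' u).1 hu with huy | ⟨huA, hux⟩
        · exact absurd (hsy.trans huy.symm) hsu
        · have huy : u ≠ y := fun h => hy (h ▸ huA)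
          rw [hM', hsy, pc_yu M hxy hux huy, hblock x u (Or.inl ⟨hx, huA⟩)]
          simp
      · have hsy : s ≠ y := fun h => hy (h ▸ hsA)
        rcases (hmemA' u).1 hu with huy | ⟨huA, hux⟩
        · rw [hM', huy, pc_sy M hxy hsx hsy, hblock s x (Or.inl ⟨hsA, hx⟩)]
          simp
        · have huy : u ≠ y := fun h => hy (h ▸ huA)
          rw [hM', pc_gen M hsu hsx hsy hux huy, hblock s u (Or.inl ⟨hsA, huA⟩),
            hblock s x (Or.inl ⟨hsA, hx⟩), hblock x u (Or.inl ⟨hx, huA⟩)]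
          simp
    · have hs' : s = x ∨ (s ∉ A ∧ s ≠ y) := by
        by_cases hsx : s = x
        · exact Or.inl hsx
        · refine Or.inr ⟨fun hsA => hs ((hmemA' s).2 (Or.inr ⟨hsA, hsx⟩)), ?_⟩
          exact fun hsy => hs ((hmemA' s).2 (Or.inl hsy))
      have hu' : u = x ∨ (u ∉ A ∧ u ≠ y) := by
        by_cases hux : u = x
        · exact Or.inl hux
        · refine Or.inr ⟨fun huA => hu ((hmemA' u).2 (Or.inr ⟨huA, hux⟩)), ?_⟩
          exact fun huy => hu ((hmemA' u).2 (Or.inl huy))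
      rcases hs' with hsx | ⟨hsA, hsy⟩
      · rcases hu' with hux | ⟨huA, huy⟩
        · exact absurd (hsx.trans hux.symm) hsu
        · have hux : u ≠ x := fun h => hsu (hsx.trans h.symm)
          rw [hM', hsx, pc_xu M hxy hux huy, hblock y u (Or.inr ⟨hy, huA⟩)]
          simp
      · have hsx : s ≠ x := fun h => hsA (h ▸ hx)
        rcases hu' with hux | ⟨huA, huy⟩
        · rw [hM', hux, pc_sx M hxy hsx hsy, hblock s y (Or.inr ⟨hsA, hy⟩)]
          simp
        · have hux : u ≠ x := fun h => huA (h ▸ hx)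
          rw [hM', pc_gen M hsu hsx hsy hux huy, hblock s u (Or.inr ⟨hsA, huA⟩),
            hblock y u (Or.inr ⟨hy, huA⟩), hblock s y (Or.inr ⟨hsA, hy⟩)]
          simp
  refine ⟨⟨fun s => pc_diag M x y s, pc_skew M hxy hskew hMxy, hblocks'⟩, ?_⟩
  -- entry identity
  have hent : ∀ v a', a' ∈ A' →
      colExt M' A' v a' = (if v = y then (-1 : F) else 1) *
        (if a' = y then (-1 / M x y) * colExt M A v x
         else colExt M A v a' + (-(M a' y) / M x y) * colExt M A v x) := by
    intro v a' ha'
    rcases (hmemA' a').1 ha' with ha'y | ⟨ha'A, ha'x⟩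
    · -- a' = y
      by_cases hvy : v = y
      · have l : colExt M' A' v a' = 1 := by simp [colExt, hvy, ha'y, hyA']
        have r : colExt M A v x = M x y := by simp [colExt, hvy, hy, hxy]
        rw [l, r, if_pos hvy, if_pos ha'y]
        field_simp
      · by_cases hvA : v ∈ A
        · by_cases hvx : v = x
          · have l : colExt M' A' v a' = M' a' v := by
              simp [colExt, hvx, hxA']
            have l2 : M' a' v = -1 / M x y := by
              rw [hM', ha'y, hvx]; exact pc_yx M hxy
            have r : colExt M A v x = 1 := by simp [colExt, hvx, hx]
            rw [l, l2, r, if_neg hvy, if_pos ha'y]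
            ring
          · have hvA' : v ∈ A' := (hmemA' v).2 (Or.inr ⟨hvA, hvx⟩)
            have l : colExt M' A' v a' = 0 := by
              simp [colExt, hvA', if_neg (show ¬ a' = v from fun h => hvy (h.symm.trans ha'y))]
            have r : colExt M A v x = 0 := by
              simp [colExt, hvA, if_neg (show ¬ x = v from fun h => hvx h.symm)]
            rw [l, r, if_neg hvy, if_pos ha'y]
            ring
        · -- v ∉ A, v ≠ y, so v ∉ A'
          have hvx : v ≠ x := fun h => hvA (h ▸ hx)
          have hvA' : v ∉ A' := by
            intro h
            rcases (hmemA' v).1 h with h | h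
            · exact hvy h
            · exact hvA h.1
          have l : colExt M' A' v a' = M' a' v := by simp [colExt, hvA']
          have l2 : M' a' v = -(M x v) / M x y := by
            rw [hM', ha'y]; exact pc_yu M hxy hvx hvy
          have r : colExt M A v x = M x v := by simp [colExt, hvA]
          rw [l, l2, r, if_neg hvy, if_pos ha'y]
          ring
    · -- a' ∈ A, a' ≠ x
      have ha'y : a' ≠ y := fun h => hy (h ▸ ha'A)
      by_cases hvy : v = y
      · have l : colExt M' A' v a' = 0 := by
          have hvA' : v ∈ A' := (hmemA' v).2 (Or.inl hvy)
          simp [colExt, hvA', if_neg (show ¬ a' = v from fun h => ha'y (h.trans hvy))]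
        have r : colExt M A v x = M x y := by simp [colExt, hvy, hy, hxy]
        have r2 : colExt M A v a' = M a' y := by simp [colExt, hvy, hy]
        rw [l, r, r2, if_pos hvy, if_neg ha'y]
        field_simp; ring
      · by_cases hvA : v ∈ A
        · by_cases hvx : v = x
          · have l : colExt M' A' v a' = M' a' v := by simp [colExt, hvx, hxA']
            have l2 : M' a' v = -(M a' y) / M x y := by
              rw [hM', hvx]; exact pc_sx M hxy ha'x ha'y
            have r : colExt M A v x = 1 := by simp [colExt, hvx, hx]
            have r2 : colExt M A v a' = 0 := by
              simp [colExt, hvx, hx, ha'x]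
            rw [l, l2, r, r2, if_neg hvy, if_neg ha'y]
            ring
          · have hvA' : v ∈ A' := (hmemA' v).2 (Or.inr ⟨hvA, hvx⟩)
            have l : colExt M' A' v a' = (if a' = v then (1:F) else 0) := by
              simp [colExt, hvA']
            have r : colExt M A v x = 0 := by
              simp [colExt, hvA, if_neg (show ¬ x = v from fun h => hvx h.symm)]
            have r2 : colExt M A v a' = (if a' = v then (1:F) else 0) := by
              simp [colExt, hvA]
            rw [l, r, r2, if_neg hvy, if_neg ha'y]
            ring
        · have hvx : v ≠ x := fun h => hvA (h ▸ hx)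
          have hvA' : v ∉ A' := by
            intro h
            rcases (hmemA' v).1 h with h | h
            · exact hvy h
            · exact hvA h.1
          have ha'v : a' ≠ v := fun h => hvA (h ▸ ha'A)
          have l : colExt M' A' v a' = M' a' v := by simp [colExt, hvA']
          have l2 : M' a' v = M a' v - M a' y * M x v / M x y := by
            rw [hM', pc_gen M ha'v ha'x ha'y hvx hvy,
              hblock a' x (Or.inl ⟨ha'A, hx⟩)]
            ring
          have r : colExt M A v x = M x v := by simp [colExt, hvA]
          have r2 : colExt M A v a' = M a' v := by simp [colExt, hvA]
          rw [l, l2, r, r2, if_neg hvy, if_neg ha'y]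
          ring
  intro I
  refine li_transfer_iff (colExt M A) (colExt M' A') A A' x y (-1 / M x y)
      (fun a' => -(M a' y) / M x y) (fun v => if v = y then -1 else 1)
      hx hyA' ?_ ?_ ?_ hent I
  · ext a
    simp only [Set.mem_diff, Set.mem_singleton_iff]
    constructor
    · rintro ⟨haA, hax⟩
      exact ⟨(hmemA' a).2 (Or.inr ⟨haA, hax⟩), fun h => hy (h ▸ haA)⟩
    · rintro ⟨haA', hay⟩
      rcases (hmemA' a).1 haA' with h | h
      · exact absurd h hay
      · exact ⟨h.1, h.2⟩
  · exact div_ne_zero (neg_ne_zero.2 one_ne_zero) hMxy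
  · intro v
    by_cases hvy : v = y <;> simp [hvy]

lemma pivot_orient2 {F V : Type} [Field F] [Fintype V] {M : Matrix V V F} {A : Set V}
    (hM : IsSkewBipartite M A) {x y : V} (hx : x ∉ A) (hy : y ∈ A) (hMxy : M x y ≠ 0) :
    IsSkewBipartite (pivotComp (fun a : F => -a) M x y) (insert x (A \ {y})) ∧
      ∀ I : Set V,
        (gIndep (colExt (pivotComp (fun a : F => -a) M x y) (insert x (A \ {y})))
          (insert x (A \ {y})) I ↔ gIndep (colExt M A) A I) := by
  obtain ⟨hdiag, hskew, hblock⟩ := hM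
  have hxy : x ≠ y := fun h => hx (h ▸ hy)
  have hyx : M y x = - M x y := hskew y x
  have hMyx : M y x ≠ 0 := by rw [hyx]; exact neg_ne_zero.2 hMxy
  set A' : Set V := insert x (A \ {y}) with hA'
  set M' : Matrix V V F := pivotComp (fun a : F => -a) M x y with hM'
  have hxA' : x ∈ A' := Set.mem_insert _ _
  have hyA' : y ∉ A' := by
    intro h
    rcases Set.mem_insert_iff.1 h with h | h
    · exact hxy h.symm
    · exact h.2 rfl
  have hmemA' : ∀ a, a ∈ A' ↔ (a = x ∨ (a ∈ A ∧ a ≠ y)) := by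
    intro a
    simp [hA', Set.mem_insert_iff, Set.mem_diff]
  have hblocks' : ∀ s u : V, ((s ∈ A' ∧ u ∈ A') ∨ (s ∉ A' ∧ u ∉ A')) → M' s u = 0 := by
    intro s u h
    by_cases hsu : s = u
    · rw [hsu, hM']; exact pc_diag M x y u
    rcases h with ⟨hs, hu⟩ | ⟨hs, hu⟩
    · rcases (hmemA' s).1 hs with hsx | ⟨hsA, hsy⟩
      · rcases (hmemA' u).1 hu with hux | ⟨huA, huy⟩
        · exact absurd (hsx.trans hux.symm) hsu
        · have hux : u ≠ x := fun h => hx (h ▸ huA)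
          rw [hM', hsx, pc_xu M hxy hux huy, hblock y u (Or.inl ⟨hy, huA⟩)]
          simp
      · have hsx : s ≠ x := fun h => hx (h ▸ hsA)
        rcases (hmemA' u).1 hu with hux | ⟨huA, huy⟩
        · rw [hM', hux, pc_sx M hxy hsx hsy, hblock s y (Or.inl ⟨hsA, hy⟩)]
          simp
        · have hux : u ≠ x := fun h => hx (h ▸ huA)
          rw [hM', pc_gen M hsu hsx hsy hux huy, hblock s u (Or.inl ⟨hsA, huA⟩),
            hblock y u (Or.inl ⟨hy, huA⟩), hblock s y (Or.inl ⟨hsA, hy⟩)]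
          simp
    · have hs' : s = y ∨ (s ∉ A ∧ s ≠ x) := by
        by_cases hsy : s = y
        · exact Or.inl hsy
        · refine Or.inr ⟨fun hsA => hs ((hmemA' s).2 (Or.inr ⟨hsA, hsy⟩)), ?_⟩
          exact fun hsx => hs ((hmemA' s).2 (Or.inl hsx))
      have hu' : u = y ∨ (u ∉ A ∧ u ≠ x) := by
        by_cases huy : u = y
        · exact Or.inl huy
        · refine Or.inr ⟨fun huA => hu ((hmemA' u).2 (Or.inr ⟨huA, huy⟩)), ?_⟩
          exact fun hux => hu ((hmemA' u).2 (Or.inl hux))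
      rcases hs' with hsy | ⟨hsA, hsx⟩
      · rcases hu' with huy | ⟨huA, hux⟩
        · exact absurd (hsy.trans huy.symm) hsu
        · have huy : u ≠ y := fun h => hsu (hsy.trans h.symm)
          rw [hM', hsy, pc_yu M hxy hux huy, hblock x u (Or.inr ⟨hx, huA⟩)]
          simp
      · rcases hu' with huy | ⟨huA, hux⟩
        · have hsy : s ≠ y := fun h => hsu (h.trans huy.symm)
          rw [hM', huy, pc_sy M hxy hsx hsy, hblock s x (Or.inr ⟨hsA, hx⟩)]
          simp
        · have hsy : s ≠ y := fun h => hsA (h ▸ hy)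
          have huy : u ≠ y := fun h => huA (h ▸ hy)
          rw [hM', pc_gen M hsu hsx hsy hux huy, hblock s u (Or.inr ⟨hsA, huA⟩),
            hblock s x (Or.inr ⟨hsA, hx⟩), hblock x u (Or.inr ⟨hx, huA⟩)]
          simp
  refine ⟨⟨fun s => pc_diag M x y s, pc_skew M hxy hskew hMxy, hblocks'⟩, ?_⟩
  have hent : ∀ v a', a' ∈ A' →
      colExt M' A' v a' = (if v = y then (-1 : F) else 1) *
        (if a' = x then (1 / M y x) * colExt M A v y
         else colExt M A v a' + (-(M a' x) / M y x) * colExt M A v y) := by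
    intro v a' ha'
    rcases (hmemA' a').1 ha' with ha'x | ⟨ha'A, ha'y⟩
    · by_cases hvx : v = x
      · have l : colExt M' A' v a' = 1 := by simp [colExt, hvx, ha'x, hxA']
        have r : colExt M A v y = M y x := by simp [colExt, hvx, hx, hxy]
        rw [l, r, if_pos ha'x, if_neg (show ¬ v = y from hvx ▸ hxy)]
        field_simp
      · by_cases hvA : v ∈ A
        · by_cases hvy : v = y
          · have l : colExt M' A' v a' = M' a' v := by simp [colExt, hvy, hyA']
            have l2 : M' a' v = -1 / M y x := by
              rw [hM', ha'x, hvy]; exact pc_xy M hxy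
            have r : colExt M A v y = 1 := by simp [colExt, hvy, hy]
            rw [l, l2, r, if_pos hvy, if_pos ha'x]
            ring
          · have hvA' : v ∈ A' := (hmemA' v).2 (Or.inr ⟨hvA, hvy⟩)
            have l : colExt M' A' v a' = 0 := by
              simp [colExt, hvA', if_neg (show ¬ a' = v from fun h => hvx (h.symm.trans ha'x))]
            have r : colExt M A v y = 0 := by
              simp [colExt, hvA, if_neg (show ¬ y = v from fun h => hvy h.symm)]
            rw [l, r, if_neg hvy, if_pos ha'x]
            ring
        · have hvy : v ≠ y := fun h => hvA (h ▸ hy)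
          have hvA' : v ∉ A' := by
            intro h
            rcases (hmemA' v).1 h with h | h
            · exact hvx h
            · exact hvA h.1
          have l : colExt M' A' v a' = M' a' v := by simp [colExt, hvA']
          have l2 : M' a' v = M y v / M y x := by
            rw [hM', ha'x]; exact pc_xu M hxy hvx hvy
          have r : colExt M A v y = M y v := by simp [colExt, hvA]
          rw [l, l2, r, if_neg hvy, if_pos ha'x]
          ring
    · have ha'x : a' ≠ x := fun h => hx (h ▸ ha'A)
      by_cases hvx : v = x
      · have l : colExt M' A' v a' = 0 := by
          have hvA' : v ∈ A' := (hmemA' v).2 (Or.inl hvx)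
          simp [colExt, hvA', if_neg (show ¬ a' = v from fun h => ha'x (h.trans hvx))]
        have r : colExt M A v y = M y x := by simp [colExt, hvx, hx, hxy]
        have r2 : colExt M A v a' = M a' x := by simp [colExt, hvx, hx]
        rw [l, r, r2, if_neg (show ¬ v = y from hvx ▸ hxy), if_neg ha'x]
        field_simp; ring
      · by_cases hvA : v ∈ A
        · by_cases hvy : v = y
          · have l : colExt M' A' v a' = M' a' v := by simp [colExt, hvy, hyA']
            have l2 : M' a' v = M a' x / M y x := by
              rw [hM', hvy]; exact pc_sy M hxy ha'x ha'y
            have r : colExt M A v y = 1 := by simp [colExt, hvy, hy]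
            have r2 : colExt M A v a' = 0 := by
              simp [colExt, hvy, hy, ha'y]
            rw [l, l2, r, r2, if_pos hvy, if_neg ha'x]
            ring
          · have hvA' : v ∈ A' := (hmemA' v).2 (Or.inr ⟨hvA, hvy⟩)
            have l : colExt M' A' v a' = (if a' = v then (1:F) else 0) := by
              simp [colExt, hvA']
            have r : colExt M A v y = 0 := by
              simp [colExt, hvA, if_neg (show ¬ y = v from fun h => hvy h.symm)]
            have r2 : colExt M A v a' = (if a' = v then (1:F) else 0) := by
              simp [colExt, hvA]
            rw [l, r, r2, if_neg hvy, if_neg ha'x]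
            ring
        · have hvy : v ≠ y := fun h => hvA (h ▸ hy)
          have hvA' : v ∉ A' := by
            intro h
            rcases (hmemA' v).1 h with h | h
            · exact hvx h
            · exact hvA h.1
          have ha'v : a' ≠ v := fun h => hvA (h ▸ ha'A)
          have l : colExt M' A' v a' = M' a' v := by simp [colExt, hvA']
          have l2 : M' a' v = M a' v - M a' x * M y v / M y x := by
            rw [hM', pc_gen M ha'v ha'x ha'y hvx hvy,
              hblock a' y (Or.inl ⟨ha'A, hy⟩)]
            ring
          have r : colExt M A v y = M y v := by simp [colExt, hvA]
          have r2 : colExt M A v a' = M a' v := by simp [colExt, hvA]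
          rw [l, l2, r, r2, if_neg hvy, if_neg ha'x]
          ring
  intro I
  refine li_transfer_iff (colExt M A) (colExt M' A') A A' y x (1 / M y x)
      (fun a' => -(M a' x) / M y x) (fun v => if v = y then -1 else 1)
      hy hxA' ?_ ?_ ?_ hent I
  · ext a
    simp only [Set.mem_diff, Set.mem_singleton_iff]
    constructor
    · rintro ⟨haA, hay⟩
      exact ⟨(hmemA' a).2 (Or.inr ⟨haA, hay⟩), fun h => hx (h ▸ haA)⟩
    · rintro ⟨haA', hax⟩
      rcases (hmemA' a).1 haA' with h | h
      · exact absurd h hax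
      · exact ⟨h.1, h.2⟩
  · exact div_ne_zero one_ne_zero hMyx
  · intro v
    by_cases hvy : v = y <;> simp [hvy]

lemma sum_range_emb {F V W : Type} [Field F] [Fintype V] [Fintype W] (h : W ↪ V) (f : V → F)
    (hf : ∀ v, v ∉ Set.range h → f v = 0) : ∑ v, f v = ∑ w, f (h w) := by
  rw [← Finset.sum_map Finset.univ h f]
  refine (Finset.sum_subset (Finset.subset_univ _) ?_).symm
  intro v _ hv
  exact hf v (fun ⟨w, hw⟩ => hv (Finset.mem_map.2 ⟨w, Finset.mem_univ w, hw⟩))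

lemma sum_split_range_Y {F V W : Type} [Field F] [Fintype V] [Fintype W] (h : W ↪ V)
    (Y : Set V) (hYr : ∀ v ∈ Y, v ∉ Set.range h) (f : V → F)
    (hf : ∀ v, v ∉ Set.range h → v ∉ Y → f v = 0) :
    ∑ v, f v = (∑ w, f (h w)) + ∑ v, Y.indicator f v := by
  have hp : ∀ v, f v = (if v ∈ Set.range h then f v else 0) + Y.indicator f v := by
    intro v
    by_cases h1 : v ∈ Set.range h
    · rw [if_pos h1, Set.indicator_of_notMem (fun h2 => hYr v h2 h1), add_zero]
    · by_cases h2 : v ∈ Y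
      · rw [if_neg h1, Set.indicator_of_mem h2, zero_add]
      · rw [if_neg h1, Set.indicator_of_notMem h2, hf v h1 h2, add_zero]
  rw [Finset.sum_congr rfl (fun v _ => hp v), Finset.sum_add_distrib]
  congr 1
  refine (sum_range_emb h _ (fun v hv => if_neg hv)).trans ?_
  exact Finset.sum_congr rfl fun w _ => if_pos ⟨w, rfl⟩

lemma gIndep_subset_basis {F V : Type} [Field F] [Fintype V] (M : Matrix V V F)
    (A Y : Set V) (hYA : Y ⊆ A) : gIndep (colExt M A) A Y := by
  intro g hsupp hrows v
  by_cases hv : v ∈ Y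
  · have h0 := hrows v (hYA hv)
    have hpt : ∀ u, g u * colExt M A u v = if u = v then g v else 0 := by
      intro u
      by_cases huv : u = v
      · rw [if_pos huv, huv, colExt, if_pos (hYA hv), if_pos rfl, mul_one]
      · rw [if_neg huv]
        by_cases hu : u ∈ Y
        · rw [colExt, if_pos (hYA hu), if_neg (fun hvu => huv hvu.symm), mul_zero]
        · rw [hsupp u hu, zero_mul]
    rw [Finset.sum_congr rfl (fun u _ => hpt u), Finset.sum_ite_eq' Finset.univ v,
      if_pos (Finset.mem_univ v)] at h0
    exact h0
  · exact hsupp v hv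

lemma induced_transfer {F V W : Type} [Field F] [Fintype V] [Fintype W]
    (M'' : Matrix V V F) (A'' : Set V) (h : W ↪ V)
    (G' : Matrix W W F) (hG' : ∀ a b, G' a b = M'' (h a) (h b)) (I : Set W) :
    gIndep (colExt G' (h ⁻¹' A'')) (h ⁻¹' A'') I ↔
      gIndep (colExt M'' A'') A'' (h '' I ∪ (A'' \ Set.range h)) := by
  classical
  set A' : Set W := h ⁻¹' A'' with hA'
  set Y : Set V := A'' \ Set.range h with hY
  have hYr : ∀ v ∈ Y, v ∉ Set.range h := fun v hv => hv.2
  have hmatch : ∀ (w a' : W), a' ∈ A' →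
      colExt M'' A'' (h w) (h a') = colExt G' A' w a' := by
    intro w a' _
    by_cases hw : w ∈ A'
    · have hw'' : h w ∈ A'' := hw
      rw [colExt, colExt, if_pos hw'', if_pos hw]
      by_cases haw : a' = w
      · rw [if_pos haw, if_pos (congrArg h haw)]
      · rw [if_neg haw, if_neg (fun he => haw (h.injective he))]
    · have hw'' : h w ∉ A'' := hw
      rw [colExt, colExt, if_neg hw'', if_neg hw, hG']
  constructor
  · -- from W-side to V-side
    intro hW gV hsupp hrows v
    have hsuppW : ∀ w, w ∉ I → gV (h w) = 0 := by
      intro w hw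
      refine hsupp (h w) ?_
      rintro (⟨w', hw', hww'⟩ | hmem)
      · exact hw (h.injective hww' ▸ hw')
      · exact hmem.2 ⟨w, rfl⟩
    have hrowsW : ∀ a', a' ∈ A' → ∑ w, gV (h w) * colExt G' A' w a' = 0 := by
      intro a' ha'
      have hz : ∀ u, u ∉ Set.range h → gV u * colExt M'' A'' u (h a') = 0 := by
        intro u hu
        by_cases huY : u ∈ Y
        · rw [colExt, if_pos huY.1, if_neg (fun he : h a' = u => hu (he ▸ ⟨a', rfl⟩)),
            mul_zero]
        · rw [hsupp u ?_, zero_mul]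
          rintro (⟨w', _, hww'⟩ | hmem)
          · exact hu (hww' ▸ ⟨w', rfl⟩)
          · exact huY hmem
      have := (sum_range_emb h _ hz).symm.trans (hrows (h a') ha')
      rw [← this]
      exact Finset.sum_congr rfl fun w _ => by rw [hmatch w a' ha']
    have hW0 := hW (fun w => gV (h w)) hsuppW hrowsW
    by_cases hvr : v ∈ Set.range h
    · obtain ⟨w, rfl⟩ := hvr
      exact hW0 w
    by_cases hvY : v ∈ Y
    · have h0 := hrows v hvY.1
      have hsplit := sum_split_range_Y h Y hYr (fun u => gV u * colExt M'' A'' u v) ?_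
      · rw [hsplit] at h0
        have hz1 : ∀ w, gV (h w) * colExt M'' A'' (h w) v = 0 :=
          fun w => by rw [show gV (h w) = 0 from hW0 w, zero_mul]
        rw [Finset.sum_congr rfl (fun w _ => hz1 w), Finset.sum_const_zero, zero_add] at h0
        have hpt : ∀ u, Y.indicator (fun u' => gV u' * colExt M'' A'' u' v) u
            = if u = v then gV v else 0 := by
          intro u
          by_cases hu : u ∈ Y
          · rw [Set.indicator_of_mem hu]
            by_cases huv : u = v
            · rw [if_pos huv, huv, colExt, if_pos hvY.1, if_pos rfl, mul_one]
            · rw [if_neg huv, colExt, if_pos hu.1, if_neg (fun he => huv he.symm), mul_zero]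
          · rw [Set.indicator_of_notMem hu, if_neg (fun e => hu (by rw [e]; exact hvY))]
        rw [Finset.sum_congr rfl (fun u _ => hpt u), Finset.sum_ite_eq' Finset.univ v,
          if_pos (Finset.mem_univ v)] at h0
        exact h0
      · intro u hur huY
        refine mul_eq_zero.2 (Or.inl (hsupp u ?_))
        rintro (⟨w', _, hww'⟩ | hmem)
        · exact hur (hww' ▸ ⟨w', rfl⟩)
        · exact huY hmem
    · refine hsupp v ?_
      rintro (⟨w', _, hww'⟩ | hmem)
      · exact hvr (hww' ▸ ⟨w', rfl⟩)
      · exact hvY hmem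
  · -- from V-side to W-side
    intro hV gW hsuppW hrowsW
    set gV : V → F := fun v =>
      if hv : ∃ w, h w = v then gW (Classical.choose hv)
      else if v ∈ Y then -(∑ w, gW w * colExt M'' A'' (h w) v) else 0 with hgV
    have hgVh : ∀ w, gV (h w) = gW w := by
      intro w
      have hex : ∃ w', h w' = h w := ⟨w, rfl⟩
      rw [hgV]
      simp only [dif_pos hex]
      have := Classical.choose_spec hex
      rw [h.injective this]
    have hgVY : ∀ v, v ∉ Set.range h → v ∈ Y →
        gV v = -(∑ w, gW w * colExt M'' A'' (h w) v) := by
      intro v hvr hvY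
      rw [hgV]
      have hne : ¬ ∃ w, h w = v := fun ⟨w, hw⟩ => hvr ⟨w, hw⟩
      simp only [dif_neg hne, if_pos hvY]
    have hsuppV : ∀ v, v ∉ (h '' I ∪ Y) → gV v = 0 := by
      intro v hv
      by_cases hvr : v ∈ Set.range h
      · obtain ⟨w, rfl⟩ := hvr
        rw [hgVh]
        exact hsuppW w (fun hw => hv (Or.inl ⟨w, hw, rfl⟩))
      · have hne : ¬ ∃ w, h w = v := fun ⟨w, hw⟩ => hvr ⟨w, hw⟩
        rw [hgV]
        simp only [dif_neg hne]
        rw [if_neg (fun hvY => hv (Or.inr hvY))]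
    have hrowsV : ∀ a, a ∈ A'' → ∑ v, gV v * colExt M'' A'' v a = 0 := by
      intro a ha
      have hsplit := sum_split_range_Y h Y hYr (fun u => gV u * colExt M'' A'' u a) ?_
      · rw [hsplit]
        by_cases har : a ∈ Set.range h
        · obtain ⟨a', rfl⟩ := har
          have ha' : a' ∈ A' := ha
          have h1 : ∑ w, gV (h w) * colExt M'' A'' (h w) (h a') = 0 := by
            rw [Finset.sum_congr rfl
              (fun w _ => by rw [hgVh, hmatch w a' ha'])]
            exact hrowsW a' ha'
          have h2 : ∀ u, Y.indicator (fun u' => gV u' * colExt M'' A'' u' (h a')) u = 0 := by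
            intro u
            by_cases hu : u ∈ Y
            · rw [Set.indicator_of_mem hu, colExt, if_pos hu.1,
                if_neg (fun he : h a' = u => (hYr u hu) (he ▸ ⟨a', rfl⟩)), mul_zero]
            · rw [Set.indicator_of_notMem hu]
          rw [h1, Finset.sum_congr rfl (fun u _ => h2 u), Finset.sum_const_zero, add_zero]
        · have haY : a ∈ Y := ⟨ha, har⟩
          have h1 : ∑ w, gV (h w) * colExt M'' A'' (h w) a
              = ∑ w, gW w * colExt M'' A'' (h w) a :=
            Finset.sum_congr rfl (fun w _ => by rw [hgVh])
          have hpt : ∀ u, Y.indicator (fun u' => gV u' * colExt M'' A'' u' a) u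
              = if u = a then gV a else 0 := by
            intro u
            by_cases hu : u ∈ Y
            · rw [Set.indicator_of_mem hu]
              by_cases hua : u = a
              · rw [if_pos hua, hua, colExt, if_pos haY.1, if_pos rfl, mul_one]
              · rw [if_neg hua, colExt, if_pos hu.1, if_neg (fun he => hua he.symm), mul_zero]
            · rw [Set.indicator_of_notMem hu, if_neg (fun e => hu (by rw [e]; exact haY))]
          rw [h1, Finset.sum_congr rfl (fun u _ => hpt u), Finset.sum_ite_eq' Finset.univ a,
            if_pos (Finset.mem_univ a), hgVY a har haY]
          ring
      · intro u hur huY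
        exact mul_eq_zero.2 (Or.inl (hsuppV u (fun hm => by
          rcases hm with ⟨w', _, hww'⟩ | hmem
          · exact hur (hww' ▸ ⟨w', rfl⟩)
          · exact huY hmem)))
    have hV0 := hV gV hsuppV hrowsV
    intro w
    rw [← hgVh w]
    exact hV0 (h w)


lemma li_repMatrix_iff {F V : Type} [Field F] [Fintype V] (M : Matrix V V F) (A I : Set V) :
    LinearIndependent F (fun i : I => fun r : ↥A => repMatrix M A r i)
      ↔ gIndep (colExt M A) A I := by
  refine (li_iff_g (fun v (r : ↥A) => colExt M A v (r : V)) I).trans ?_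
  constructor
  · intro H g h1 h2
    exact H g h1 (fun r => h2 r r.2)
  · intro H g h1 h2
    exact H g h1 (fun a ha => h2 ⟨a, ha⟩)

lemma pivot_step {F V : Type} [Field F] [Fintype V] {M : Matrix V V F} {A : Set V}
    (hM : IsSkewBipartite M A) {x y : V} (hMxy : M x y ≠ 0) :
    ∃ A' : Set V, IsSkewBipartite (pivotComp (fun a : F => -a) M x y) A' ∧
      ∀ I : Set V, gIndep (colExt (pivotComp (fun a : F => -a) M x y) A') A' I
        ↔ gIndep (colExt M A) A I := by
  by_cases hx : x ∈ A
  · have hy : y ∉ A := fun hy => hMxy (hM.2.2 x y (Or.inl ⟨hx, hy⟩))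
    obtain ⟨h1, h2⟩ := pivot_orient1 hM hx hy hMxy
    exact ⟨_, h1, h2⟩
  · by_cases hy : y ∈ A
    · obtain ⟨h1, h2⟩ := pivot_orient2 hM hx hy hMxy
      exact ⟨_, h1, h2⟩
    · exact absurd (hM.2.2 x y (Or.inr ⟨hx, hy⟩)) hMxy

lemma pivotEquiv_inv {F V : Type} [Field F] [Fintype V] {G G'' : Matrix V V F}
    (hpe : PivotEquiv (fun a : F => -a) G G'') {A : Set V} (hG : IsSkewBipartite G A) :
    ∃ A'' : Set V, IsSkewBipartite G'' A'' ∧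
      ∀ I : Set V, gIndep (colExt G'' A'') A'' I ↔ gIndep (colExt G A) A I := by
  induction hpe with
  | refl => exact ⟨A, hG, fun I => Iff.rfl⟩
  | tail N x y hxy hNxy hMN ih =>
      obtain ⟨A'', hSB, hIff⟩ := ih
      obtain ⟨A3, hSB3, hIff3⟩ := pivot_step hSB hNxy
      exact ⟨A3, hSB3, fun I => (hIff3 I).trans (hIff I)⟩

lemma mcontract_indep_iff {α : Type} (M : Matroid α) {C I : Set α} (hC : M.Indep C)
    (hIE : I ⊆ M.E) (hIC : Disjoint I C) :
    (mcontract M C).Indep I ↔ M.Indep (I ∪ C) := by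
  have hCE : C ⊆ M.E := hC.subset_ground
  have hIEC : I ⊆ M.E \ C := Set.subset_diff.2 ⟨hIE, hIC⟩
  rw [mcontract, Matroid.dual_indep_iff_exists']
  have hbase : ∀ B : Set α, (mdelete M✶ C).IsBase B ↔ M✶.IsBasis B (M.E \ C) := by
    intro B
    exact Matroid.isBase_restrict_iff (by exact Set.diff_subset)
  constructor
  · rintro ⟨-, B', hB', hdisj⟩
    rw [hbase] at hB'
    obtain ⟨B₀, hB₀, rfl⟩ := hB'.exists_isBase
    have hB : M.IsBase (M.E \ B₀) := hB₀.compl_isBase_of_dual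
    have hiff := hB.inter_isBasis_iff_compl_inter_isBasis_dual (X := C) hCE
    have hB0E : B₀ ⊆ M.E := hB₀.subset_ground
    have h2 : M✶.IsBasis (M.E \ (M.E \ B₀) ∩ (M.E \ C)) (M.E \ C) := by
      rwa [Set.diff_diff_cancel_left hB0E]
    have h3 : M.IsBasis ((M.E \ B₀) ∩ C) C := hiff.mpr h2
    have h4 : (M.E \ B₀) ∩ C = C := hC.eq_of_isBasis h3
    have hCB : C ⊆ M.E \ B₀ := by rw [← h4]; exact Set.inter_subset_left
    have hIB : I ⊆ M.E \ B₀ := by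
      intro v hv
      refine ⟨hIE hv, fun hvB => ?_⟩
      exact (Set.disjoint_left.1 hdisj) hv ⟨hvB, hIEC hv⟩
    exact hB.indep.subset (Set.union_subset hIB hCB)
  · intro hIndep
    obtain ⟨B, hB, hsub⟩ := hIndep.exists_isBase_superset
    refine ⟨hIEC, (M.E \ B) ∩ (M.E \ C), ?_, ?_⟩
    · rw [hbase]
      have hiff := hB.inter_isBasis_iff_compl_inter_isBasis_dual (X := C) hCE
      have hbc : M.IsBasis (B ∩ C) C := by
        rw [Set.inter_eq_self_of_subset_right (Set.union_subset_iff.1 hsub).2]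
        exact hC.isBasis_self
      exact hiff.mp hbc
    · exact Set.disjoint_left.2 fun v hv ⟨⟨_, hvB⟩, _⟩ =>
        hvB (hsub (Set.mem_union_left _ hv))

end AuxProof


/-- Let `G` be a skew-symmetric bipartite F*-graph with bipartition
`(A, Aᶜ)`. If `G'` is a pivot-minor of `G` (with `σ = -·`), then `G'` is a
skew-symmetric bipartite F*-graph: there is a bipartition `(A', A'ᶜ)` of its vertex set
such that `M_F(G', A', A'ᶜ)` is isomorphic to a minor of `M_F(G, A, Aᶜ)`. -/
theorem pivotMinor_implies_minor_of_fundamental_matroid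
    {F V W : Type} [Field F] [Fintype V] [Fintype W]
    (G : Matrix V V F) (A : Set V) (hG : IsSkewBipartite G A)
    (N : Matroid V) (hN : IsColMatroid N (repMatrix G A))
    (G' : Matrix W W F) (hGG' : IsPivotMinor (fun a => -a) G' G) :
    ∃ A' : Set W, IsSkewBipartite G' A' ∧
      ∀ N' : Matroid W, IsColMatroid N' (repMatrix G' A') →
        ∃ X Y : Set V, Disjoint X Y ∧
          MatroidIso N' (mcontract (mdelete N X) Y) := by
  classical
  obtain ⟨G'', hpe, h, hh⟩ := hGG'
  obtain ⟨A'', hSB'', hInv⟩ := pivotEquiv_inv hpe hG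
  refine ⟨h ⁻¹' A'', ?_, ?_⟩
  · obtain ⟨hd, hs, hb⟩ := hSB''
    refine ⟨fun w => by rw [hh]; exact hd _, fun a b => by rw [hh, hh]; exact hs _ _, ?_⟩
    intro a b hab
    rw [hh]
    refine hb _ _ ?_
    rcases hab with ⟨ha, hbb⟩ | ⟨ha, hbb⟩
    · exact Or.inl ⟨ha, hbb⟩
    · exact Or.inr ⟨ha, hbb⟩
  · intro N' hN'
    set A' : Set W := h ⁻¹' A'' with hA'def
    set Y : Set V := A'' \ Set.range h with hYdef
    set X : Set V := (Set.range h ∪ A'')ᶜ with hXdef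
    have hNE : N.E = Set.univ := hN.1
    have hdisjXY : Disjoint X Y := by
      rw [Set.disjoint_left]
      intro v hvX hvY
      exact hvX (Or.inr hvY.1)
    have hNIndep : ∀ J : Set V, N.Indep J ↔ gIndep (colExt G A) A J :=
      fun J => (hN.2 J).trans (li_repMatrix_iff G A J)
    have hYind : N.Indep Y :=
      (hNIndep Y).2 ((hInv Y).1 (gIndep_subset_basis G'' A'' Y Set.diff_subset))
    have hDindep : ∀ J : Set V, (mdelete N X).Indep J ↔ (N.Indep J ∧ J ⊆ N.E \ X) :=
      fun J => Matroid.restrict_indep_iff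
    have hYsub : Y ⊆ N.E \ X := by
      intro v hv
      exact ⟨by rw [hNE]; trivial, fun hvX => hvX (Or.inr hv.1)⟩
    have hYP : (mdelete N X).Indep Y := (hDindep Y).2 ⟨hYind, hYsub⟩
    refine ⟨X, Y, hdisjXY, ⇑h, ?_, ?_⟩
    · -- BijOn
      have hgr : (mcontract (mdelete N X) Y).E = (N.E \ X) \ Y := rfl
      rw [hN'.1, hgr, hNE]
      have hset : (Set.univ \ X) \ Y = Set.range ⇑h := by
        ext v
        constructor
        · rintro ⟨⟨-, hvX⟩, hvY⟩
          rcases not_not.1 hvX with hv | hv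
          · exact hv
          · by_contra hvr
            exact hvY ⟨hv, hvr⟩
        · rintro ⟨w, rfl⟩
          exact ⟨⟨trivial, fun hvX => hvX (Or.inl ⟨w, rfl⟩)⟩, fun hvY => hvY.2 ⟨w, rfl⟩⟩
      rw [hset]
      refine ⟨fun w _ => ⟨w, rfl⟩, h.injective.injOn, ?_⟩
      intro v hv
      rw [Set.image_univ]
      exact hv
    · intro I hI
      have hE1 : N'.Indep I ↔ gIndep (colExt G' A') A' I :=
        (hN'.2 I).trans (li_repMatrix_iff G' A' I)
      have hE2 := induced_transfer G'' A'' h G' hh I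
      have hE3 := hInv (⇑h '' I ∪ Y)
      have hE4 : N.Indep (⇑h '' I ∪ Y) ↔ gIndep (colExt G A) A (⇑h '' I ∪ Y) :=
        hNIndep _
      have hsub : ⇑h '' I ∪ Y ⊆ N.E \ X := by
        rintro v (⟨w, -, rfl⟩ | hv)
        · exact ⟨by rw [hNE]; trivial, fun hvX => hvX (Or.inl ⟨w, rfl⟩)⟩
        · exact hYsub hv
      have hE5 : (mdelete N X).Indep (⇑h '' I ∪ Y) ↔ N.Indep (⇑h '' I ∪ Y) := by
        rw [hDindep]
        exact and_iff_left hsub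
      have hhIE : ⇑h '' I ⊆ (mdelete N X).E := by
        rintro v ⟨w, -, rfl⟩
        exact ⟨by rw [hNE]; trivial, fun hvX => hvX (Or.inl ⟨w, rfl⟩)⟩
      have hdisjIY : Disjoint (⇑h '' I) Y := by
        rw [Set.disjoint_left]
        rintro v ⟨w, -, rfl⟩ hvY
        exact hvY.2 ⟨w, rfl⟩
      have hContr := mcontract_indep_iff (mdelete N X) hYP hhIE hdisjIY
      exact hE1.trans (hE2.trans (hE3.trans
        (hE4.symm.trans (hE5.symm.trans hContr.symm))))
end
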